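/- arXiv:2001.05729 — 6 statements merged into one kernel-verified Lean document; each statement's English description precedes it below -/
import Mathlib

section
/- Let δ ∈ [0,1), α > −δ and β > 0. Let {S_{s,h} : s ∈ ℕ, 1 ≤ h ≤ 2^s} and {R_{s,h} : s ∈ ℕ, 1 ≤ h ≤ 2^s} be mutually independent random variables on a probability space, with S_{s,h} having the Beta(1−δ, α+δ(s+1)) distribution and R_{s,h} having the Beta(β,β) distribution. Then the multiscale stick-breaking weights π_{s,h} built from these variables satisfy ∑_{s=0}^∞ ∑_{h=1}^{2^s} π_{s,h} = 1 almost surely. -/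
open MeasureTheory ProbabilityTheory Filter

/-- The Beta(a, b) distribution on (0,1): density proportional to `x^(a-1) (1-x)^(b-1)`. -/
noncomputable def betaMeasure (a b : ℝ) : Measure ℝ :=
  (volume.restrict (Set.Ioo (0:ℝ) 1)).withDensity fun x =>
    ENNReal.ofReal (x ^ (a - 1) * (1 - x) ^ (b - 1) /
      ∫ y in Set.Ioo (0:ℝ) 1, y ^ (a - 1) * (1 - y) ^ (b - 1))

/-- The ancestor at scale `r ≤ s` of node `(s, h)`: the node `(r, ⌈h 2^(r-s)⌉)`. -/
def anc (s h r : ℕ) : ℕ := (h - 1) / 2 ^ (s - r) + 1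

/-- Multiscale stick-breaking weight of node `(s, h)` built from the stopping probabilities `S`
and the right-turn probabilities `R`:
`π (s,h) = S (s,h) * ∏_{r<s} (1 - S (r, aᵣ)) * Tᵣ`, where `aᵣ` is the ancestor of `(s,h)` at
scale `r` and `Tᵣ = R (r, aᵣ)` if the path goes right at scale `r`, `1 - R (r, aᵣ)` otherwise. -/
noncomputable def msWeight (S R : ℕ → ℕ → ℝ) (s h : ℕ) : ℝ :=
  S s h * ∏ r ∈ Finset.range s,
    ((1 - S r (anc s h r)) *
      (if anc s h (r + 1) = 2 * anc s h r then R r (anc s h r)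
       else 1 - R r (anc s h r)))



open Finset Topology
open scoped ENNReal NNReal

section AuxLemmas
set_option linter.unusedVariables false
set_option linter.unusedSectionVars false
set_option linter.unusedTactic false
set_option linter.deprecated false


noncomputable def Dint (a b : ℝ) : ℝ :=
  ∫ y in Set.Ioo (0:ℝ) 1, y ^ (a - 1) * (1 - y) ^ (b - 1)

lemma complexify {a b x : ℝ} (hx0 : 0 ≤ x) (hx1 : x ≤ 1) :
    ((x ^ (a - 1) * (1 - x) ^ (b - 1) : ℝ) : ℂ)
      = (x:ℂ) ^ ((a:ℂ) - 1) * (1 - (x:ℂ)) ^ ((b:ℂ) - 1) := by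
  have h1 : (0:ℝ) ≤ 1 - x := by linarith
  push_cast [Complex.ofReal_cpow hx0, Complex.ofReal_cpow h1]
  norm_num

lemma betaIntegrand_intervalIntegrable {a b : ℝ} (ha : 0 < a) (hb : 0 < b) :
    IntervalIntegrable (fun y : ℝ => y ^ (a - 1) * (1 - y) ^ (b - 1)) volume 0 1 := by
  have h := Complex.betaIntegral_convergent (u := (a:ℂ)) (v := (b:ℂ)) (by simpa) (by simpa)
  have h2 : IntervalIntegrable
      (fun x : ℝ => (((x:ℝ) ^ (a-1) * (1-x) ^ (b-1) : ℝ) : ℂ)) volume 0 1 := by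
    apply h.congr
    intro x hx
    rw [Set.uIoc_of_le (by norm_num : (0:ℝ) ≤ 1)] at hx
    exact (complexify (le_of_lt hx.1) hx.2).symm
  rw [intervalIntegrable_iff_integrableOn_Ioc_of_le (by norm_num : (0:ℝ) ≤ 1)] at h2 ⊢
  simpa [IntegrableOn] using h2.re

lemma betaIntegrand_integrableOn {a b : ℝ} (ha : 0 < a) (hb : 0 < b) :
    IntegrableOn (fun y : ℝ => y ^ (a - 1) * (1 - y) ^ (b - 1)) (Set.Ioo 0 1) volume := by
  have := (intervalIntegrable_iff_integrableOn_Ioc_of_le (by norm_num : (0:ℝ) ≤ 1)).mp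
    (betaIntegrand_intervalIntegrable ha hb)
  exact this.mono_set Set.Ioo_subset_Ioc_self

lemma Dint_pos {a b : ℝ} (ha : 0 < a) (hb : 0 < b) : 0 < Dint a b := by
  rw [Dint, setIntegral_pos_iff_support_of_nonneg_ae]
  · have hsub : Set.Ioo (0:ℝ) 1 ⊆ Function.support
        (fun y : ℝ => y ^ (a - 1) * (1 - y) ^ (b - 1)) := by
      intro y hy
      have : 0 < y ^ (a - 1) * (1 - y) ^ (b - 1) :=
        mul_pos (Real.rpow_pos_of_pos hy.1 _) (Real.rpow_pos_of_pos (by linarith [hy.2]) _)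
      exact ne_of_gt this
    rw [Set.inter_eq_self_of_subset_right hsub]
    simp
  · filter_upwards [ae_restrict_mem measurableSet_Ioo] with y hy
    have h1 : (0:ℝ) < y := hy.1
    have h2 : (0:ℝ) < 1 - y := by linarith [hy.2]
    exact le_of_lt (mul_pos (Real.rpow_pos_of_pos h1 _) (Real.rpow_pos_of_pos h2 _))
  · exact betaIntegrand_integrableOn ha hb

lemma Dint_complex {a b : ℝ} (ha : 0 < a) (hb : 0 < b) :
    Complex.betaIntegral a b = ((Dint a b : ℝ) : ℂ) := by
  rw [Complex.betaIntegral, intervalIntegral.integral_of_le (by norm_num : (0:ℝ) ≤ 1)]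
  have : Dint a b = ∫ y in Set.Ioc (0:ℝ) 1, y ^ (a - 1) * (1 - y) ^ (b - 1) :=
    (MeasureTheory.integral_Ioc_eq_integral_Ioo).symm
  rw [this]
  have h3 := integral_ofReal (𝕜 := ℂ) (f := fun y : ℝ => y ^ (a - 1) * (1 - y) ^ (b - 1))
    (μ := volume.restrict (Set.Ioc (0:ℝ) 1))
  have h4 : ∫ (x : ℝ) in Set.Ioc (0:ℝ) 1, ((x ^ (a - 1) * (1 - x) ^ (b - 1) : ℝ) : ℂ)
      = ∫ (x : ℝ) in Set.Ioc (0:ℝ) 1, (x:ℂ) ^ ((a:ℂ) - 1) * (1 - (x:ℂ)) ^ ((b:ℂ) - 1) := by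
    apply setIntegral_congr_fun measurableSet_Ioc
    intro x hx
    exact complexify (le_of_lt hx.1) hx.2
  rw [← h4]
  norm_cast


lemma Dint_recurrence {a b : ℝ} (ha : 0 < a) (hb : 0 < b) :
    a * Dint a (b + 1) = b * Dint (a + 1) b := by
  have h := Complex.betaIntegral_recurrence (u := (a:ℂ)) (v := (b:ℂ)) (by simpa) (by simpa)
  rw [show ((a:ℂ) + 1) = ((a + 1 : ℝ) : ℂ) by push_cast; ring,
    show ((b:ℂ) + 1) = ((b + 1 : ℝ) : ℂ) by push_cast; ring,
    Dint_complex ha (by linarith), Dint_complex (by linarith) hb] at h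
  exact_mod_cast h

lemma Dint_split {a b : ℝ} (ha : 0 < a) (hb : 0 < b) :
    Dint a b = Dint (a + 1) b + Dint a (b + 1) := by
  have key : ∀ y ∈ Set.Ioo (0:ℝ) 1,
      y ^ (a - 1) * (1 - y) ^ (b - 1)
        = y ^ (a + 1 - 1) * (1 - y) ^ (b - 1) + y ^ (a - 1) * (1 - y) ^ (b + 1 - 1) := by
    intro y hy
    have hy0 : (0:ℝ) < y := hy.1
    have hy1 : (0:ℝ) < 1 - y := by linarith [hy.2]
    have e1 : y ^ (a + 1 - 1) = y ^ (a - 1) * y := by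
      rw [show a + 1 - 1 = (a - 1) + 1 by ring, Real.rpow_add_one (ne_of_gt hy0)]
    have e2 : (1 - y) ^ (b + 1 - 1) = (1 - y) ^ (b - 1) * (1 - y) := by
      rw [show b + 1 - 1 = (b - 1) + 1 by ring, Real.rpow_add_one (ne_of_gt hy1)]
    rw [e1, e2]; ring
  rw [Dint, setIntegral_congr_fun measurableSet_Ioo key, integral_add
    ((betaIntegrand_integrableOn (by linarith) hb))
    ((betaIntegrand_integrableOn ha (by linarith)))]
  rfl

lemma Dint_ratio {a b : ℝ} (ha : 0 < a) (hb : 0 < b) :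
    Dint a (b + 1) = b / (a + b) * Dint a b := by
  have h1 := Dint_recurrence ha hb
  have h2 := Dint_split ha hb
  have hab : a + b ≠ 0 := by positivity
  field_simp
  nlinarith [Dint_pos ha hb]


lemma rho_measurable (a b : ℝ) :
    Measurable (fun x : ℝ => x ^ (a - 1) * (1 - x) ^ (b - 1) / Dint a b) :=
  ((measurable_id'.pow_const _).mul
    ((measurable_const.sub measurable_id').pow_const _)).div_const _

lemma betaMeasure_compl (a b : ℝ) {s : Set ℝ} (hs : MeasurableSet s)
    (h : s ∩ Set.Ioo (0:ℝ) 1 = ∅) : _root_.betaMeasure a b s = 0 := by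
  rw [_root_.betaMeasure, withDensity_apply _ hs, Measure.restrict_restrict hs, h]
  simp

lemma betaMeasure_integral_one_sub {a b : ℝ} (ha : 0 < a) (hb : 0 < b) :
    ∫ x, (1 - x) ∂(_root_.betaMeasure a b) = b / (a + b) := by
  have hD := Dint_pos ha hb
  have hmeas : Measurable (fun x : ℝ =>
      Real.toNNReal (x ^ (a - 1) * (1 - x) ^ (b - 1) / Dint a b)) := by
    exact (rho_measurable a b).real_toNNReal
  have hrw : _root_.betaMeasure a b = (volume.restrict (Set.Ioo (0:ℝ) 1)).withDensity
      fun x => ((Real.toNNReal (x ^ (a - 1) * (1 - x) ^ (b - 1) / Dint a b) : ℝ≥0) : ℝ≥0∞) :=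
    rfl
  rw [hrw, integral_withDensity_eq_integral_smul hmeas]
  have hcong : ∀ x ∈ Set.Ioo (0:ℝ) 1,
      (Real.toNNReal (x ^ (a - 1) * (1 - x) ^ (b - 1) / Dint a b)) • (1 - x)
        = x ^ (a - 1) * (1 - x) ^ (b + 1 - 1) / Dint a b := by
    intro x hx
    have h0 : (0:ℝ) < x := hx.1
    have h1 : (0:ℝ) < 1 - x := by linarith [hx.2]
    have hnn : 0 ≤ x ^ (a - 1) * (1 - x) ^ (b - 1) / Dint a b := by
      have := (Real.rpow_pos_of_pos h0 (a-1)).le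
      have := (Real.rpow_pos_of_pos h1 (b-1)).le
      positivity
    rw [NNReal.smul_def, Real.coe_toNNReal _ hnn,
      show b + 1 - 1 = (b - 1) + 1 by ring, Real.rpow_add_one (ne_of_gt h1), smul_eq_mul]
    ring
  rw [setIntegral_congr_fun measurableSet_Ioo hcong, integral_div]
  have : ∫ x in Set.Ioo (0:ℝ) 1, x ^ (a - 1) * (1 - x) ^ (b + 1 - 1) = Dint a (b + 1) := rfl
  rw [this, Dint_ratio ha hb]
  field_simp


noncomputable def Wfun (S R : ℕ → ℕ → ℝ) (s h : ℕ) : ℝ :=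
  ∏ r ∈ Finset.range s,
    ((1 - S r (anc s h r)) *
      (if anc s h (r + 1) = 2 * anc s h r then R r (anc s h r)
       else 1 - R r (anc s h r)))

lemma msWeight_eq (S R : ℕ → ℕ → ℝ) (s h : ℕ) :
    msWeight S R s h = S s h * Wfun S R s h := rfl

lemma anc_self (s h : ℕ) (hh : 1 ≤ h) : anc s h s = h := by
  simp [anc, Nat.sub_add_cancel hh]

lemma anc_bounds {s h : ℕ} (r : ℕ) (h1 : 1 ≤ h) (h2 : h ≤ 2 ^ s) (hr : r ≤ s) :
    1 ≤ anc s h r ∧ anc s h r ≤ 2 ^ r := by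
  constructor
  · simp [anc]
  · rw [anc]
    have : (h - 1) / 2 ^ (s - r) ≤ (2 ^ s - 1) / 2 ^ (s - r) :=
      Nat.div_le_div_right (by omega)
    have h3 : (2 ^ s - 1) / 2 ^ (s - r) = 2 ^ r - 1 := by
      have hs : 2 ^ s = 2 ^ (s - r) * 2 ^ r := by
        rw [← pow_add]; congr 1; omega
      have hpos : 0 < 2 ^ (s - r) := Nat.pow_pos (by norm_num)
      rw [hs]
      have h5 : 1 ≤ 2 ^ r := Nat.one_le_two_pow
      have e1 : 2 ^ (s - r) * (2 ^ r - 1) = 2 ^ (s - r) * 2 ^ r - 2 ^ (s - r) := by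
        rw [Nat.mul_sub, Nat.mul_one]
      have e2 : 2 ^ (s - r) ≤ 2 ^ (s - r) * 2 ^ r := Nat.le_mul_of_pos_right _ (by omega)
      rw [show 2 ^ (s - r) * 2 ^ r - 1 = 2 ^ (s - r) * (2 ^ r - 1) + (2 ^ (s - r) - 1) by
        omega]
      rw [Nat.mul_add_div hpos, Nat.div_eq_of_lt (by omega)]
      omega
    have h4 : 1 ≤ 2 ^ r := Nat.one_le_two_pow
    omega

lemma anc_double_right {n r a : ℕ} (hr : r ≤ n) (ha : 1 ≤ a) :
    anc (n + 1) (2 * a) r = anc n a r := by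
  rw [anc, anc, show n + 1 - r = (n - r) + 1 by omega, pow_succ,
    mul_comm (2 ^ (n - r)) 2, ← Nat.div_div_eq_div_mul,
    show 2 * a - 1 = 2 * (a - 1) + 1 by omega, Nat.mul_add_div (by norm_num)]
  norm_num

lemma anc_double_left {n r a : ℕ} (hr : r ≤ n) (ha : 1 ≤ a) :
    anc (n + 1) (2 * a - 1) r = anc n a r := by
  rw [anc, anc, show n + 1 - r = (n - r) + 1 by omega, pow_succ,
    mul_comm (2 ^ (n - r)) 2, ← Nat.div_div_eq_div_mul,
    show 2 * a - 1 - 1 = 2 * (a - 1) by omega, Nat.mul_div_cancel_left _ (by norm_num : 0 < 2)]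

lemma sum_double {M : Type*} [AddCommMonoid M] (g : ℕ → M) (m : ℕ) :
    ∑ h ∈ Icc 1 (2 * m), g h = ∑ a ∈ Icc 1 m, (g (2 * a - 1) + g (2 * a)) := by
  induction m with
  | zero => simp
  | succ m ih =>
    rw [show 2 * (m + 1) = (2 * m + 1) + 1 by ring]
    rw [Finset.sum_Icc_succ_top (by omega), Finset.sum_Icc_succ_top (by omega),
      Finset.sum_Icc_succ_top (by omega : 1 ≤ m + 1), ih]
    rw [show 2 * (m + 1) - 1 = 2 * m + 1 by omega, show 2 * (m + 1) = 2 * m + 1 + 1 by ring]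
    rw [add_assoc]

lemma Wfun_succ_right (S R : ℕ → ℕ → ℝ) (n a : ℕ) (ha : 1 ≤ a) :
    Wfun S R (n + 1) (2 * a) = Wfun S R n a * ((1 - S n a) * R n a) := by
  rw [Wfun, Finset.prod_range_succ]
  congr 1
  · rw [Wfun]
    apply Finset.prod_congr rfl
    intro r hr
    rw [Finset.mem_range] at hr
    rw [anc_double_right (by omega) ha, anc_double_right (by omega) ha]
  · rw [anc_double_right le_rfl ha, anc_self (n+1) (2*a) (by omega), anc_self n a ha, if_pos rfl]

lemma Wfun_succ_left (S R : ℕ → ℕ → ℝ) (n a : ℕ) (ha : 1 ≤ a) :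
    Wfun S R (n + 1) (2 * a - 1) = Wfun S R n a * ((1 - S n a) * (1 - R n a)) := by
  rw [Wfun, Finset.prod_range_succ]
  congr 1
  · rw [Wfun]
    apply Finset.prod_congr rfl
    intro r hr
    rw [Finset.mem_range] at hr
    rw [anc_double_left (by omega) ha, anc_double_left (by omega) ha]
  · rw [anc_double_left le_rfl ha, anc_self (n+1) (2*a-1) (by omega), anc_self n a ha,
      if_neg (by omega)]

noncomputable def Lsum (S R : ℕ → ℕ → ℝ) (n : ℕ) : ℝ :=
  ∑ h ∈ Icc 1 (2 ^ n), Wfun S R n h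

lemma Lsum_zero (S R : ℕ → ℕ → ℝ) : Lsum S R 0 = 1 := by
  simp [Lsum, Wfun]

lemma Lsum_succ (S R : ℕ → ℕ → ℝ) (n : ℕ) :
    Lsum S R (n + 1) = ∑ h ∈ Icc 1 (2 ^ n), Wfun S R n h * (1 - S n h) := by
  rw [Lsum, pow_succ, mul_comm (2 ^ n) 2, sum_double]
  apply Finset.sum_congr rfl
  intro a haa
  rw [Finset.mem_Icc] at haa
  rw [Wfun_succ_left S R n a haa.1, Wfun_succ_right S R n a haa.1]
  ring

lemma partial_sum_eq (S R : ℕ → ℕ → ℝ) (n : ℕ) :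
    ∑ s ∈ range n, ∑ h ∈ Icc 1 (2 ^ s), msWeight S R s h = 1 - Lsum S R n := by
  induction n with
  | zero => simp [Lsum_zero]
  | succ n ih =>
    rw [Finset.sum_range_succ, ih, Lsum_succ]
    simp only [msWeight_eq]
    rw [show ∑ h ∈ Icc 1 (2 ^ n), Wfun S R n h * (1 - S n h)
        = Lsum S R n - ∑ h ∈ Icc 1 (2 ^ n), S n h * Wfun S R n h by
      rw [Lsum, ← Finset.sum_sub_distrib]
      apply Finset.sum_congr rfl
      intro h _
      ring]
    ring

section Bounds



variable {S R : ℕ → ℕ → ℝ}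
  (hg : ∀ s h, 1 ≤ h → h ≤ 2 ^ s → S s h ∈ Set.Icc (0:ℝ) 1 ∧ R s h ∈ Set.Icc (0:ℝ) 1)

include hg

lemma factor_mem {n h : ℕ} (h1 : 1 ≤ h) (h2 : h ≤ 2 ^ n) {r : ℕ} (hr : r < n) :
    (1 - S r (anc n h r)) *
      (if anc n h (r + 1) = 2 * anc n h r then R r (anc n h r)
       else 1 - R r (anc n h r)) ∈ Set.Icc (0:ℝ) 1 := by
  obtain ⟨ha1, ha2⟩ := anc_bounds r h1 h2 (le_of_lt hr)
  obtain ⟨hS', hR'⟩ := hg r (anc n h r) ha1 ha2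
  obtain ⟨hS1, hS2⟩ := hS'
  obtain ⟨hR1, hR2⟩ := hR'
  constructor
  · apply mul_nonneg (by linarith)
    split_ifs <;> linarith
  · apply mul_le_one₀ (by linarith)
    · split_ifs <;> linarith
    · split_ifs <;> linarith

lemma Wfun_mem {n h : ℕ} (h1 : 1 ≤ h) (h2 : h ≤ 2 ^ n) :
    Wfun S R n h ∈ Set.Icc (0:ℝ) 1 := by
  constructor
  · apply Finset.prod_nonneg
    intro r hr
    exact (factor_mem hg h1 h2 (Finset.mem_range.mp hr)).1
  · apply Finset.prod_le_one
    · intro r hr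
      exact (factor_mem hg h1 h2 (Finset.mem_range.mp hr)).1
    · intro r hr
      exact (factor_mem hg h1 h2 (Finset.mem_range.mp hr)).2

lemma msWeight_nonneg {n h : ℕ} (h1 : 1 ≤ h) (h2 : h ≤ 2 ^ n) :
    0 ≤ msWeight S R n h := by
  have hW := Wfun_mem hg h1 h2
  have hs := (hg n h h1 h2).1
  exact mul_nonneg hs.1 hW.1

lemma Lsum_nonneg (n : ℕ) : 0 ≤ Lsum S R n := by
  apply Finset.sum_nonneg
  intro h hh
  rw [Finset.mem_Icc] at hh
  exact (Wfun_mem hg hh.1 hh.2).1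

lemma Lsum_succ_le (n : ℕ) : Lsum S R (n + 1) ≤ Lsum S R n := by
  rw [Lsum_succ, Lsum]
  apply Finset.sum_le_sum
  intro h hh
  rw [Finset.mem_Icc] at hh
  have hW := Wfun_mem hg hh.1 hh.2
  have hs := (hg n h hh.1 hh.2).1
  nlinarith [hW.1, hW.2, hs.1, hs.2]

end Bounds



variable {Ω : Type*} [MeasurableSpace Ω] {P : Measure Ω} [IsProbabilityMeasure P]
  (S R : ℕ → ℕ → Ω → ℝ)

lemma Wfun_measurable (hSmeas : ∀ s h, Measurable (S s h))
    (hRmeas : ∀ s h, Measurable (R s h)) (n h : ℕ) :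
    Measurable (fun ω => Wfun (fun a b => S a b ω) (fun a b => R a b ω) n h) := by
  apply Finset.measurable_prod
  intro r _
  apply Measurable.mul
  · exact measurable_const.sub (hSmeas _ _)
  · split_ifs
    · exact hRmeas _ _
    · exact measurable_const.sub (hRmeas _ _)

lemma indep_W_S
    (hSmeas : ∀ s h, Measurable (S s h)) (hRmeas : ∀ s h, Measurable (R s h))
    (hindep : iIndepFun
      (fun i : (ℕ × ℕ) ⊕ (ℕ × ℕ) =>
        Sum.elim (fun p => S p.1 p.2) (fun p => R p.1 p.2) i) P)
    (n h : ℕ) :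
    IndepFun (fun ω => Wfun (fun a b => S a b ω) (fun a b => R a b ω) n h)
      (fun ω => 1 - S n h ω) P := by
  classical
  set g : (ℕ × ℕ) ⊕ (ℕ × ℕ) → ℝ → ℝ := fun i =>
    Sum.elim (fun _ => fun x : ℝ => 1 - x)
      (fun p => fun x : ℝ => if anc n h (p.1 + 1) = 2 * p.2 then x else 1 - x) i with hg
  have hgmeas : ∀ i, Measurable (g i) := by
    rintro (p | p)
    · exact measurable_const.sub measurable_id
    · simp only [hg, Sum.elim_inr]
      split_ifs
      · exact measurable_id
      · exact measurable_const.sub measurable_id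
  have hindep' := hindep.comp g hgmeas
  set f' : (ℕ × ℕ) ⊕ (ℕ × ℕ) → Ω → ℝ := fun i =>
    g i ∘ Sum.elim (fun p => S p.1 p.2) (fun p => R p.1 p.2) i with hf'
  have hf'meas : ∀ i, Measurable (f' i) := by
    rintro (p | p)
    · exact (hgmeas _).comp (hSmeas _ _)
    · exact (hgmeas _).comp (hRmeas _ _)
  set A : Finset ((ℕ × ℕ) ⊕ (ℕ × ℕ)) :=
    (Finset.range n).image (fun r => Sum.inl (r, anc n h r)) ∪
      (Finset.range n).image (fun r => Sum.inr (r, anc n h r)) with hA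
  have hnotmem : Sum.inl (n, h) ∉ A := by
    simp only [hA, Finset.mem_union, Finset.mem_image, Finset.mem_range]
    push_neg
    constructor
    · rintro r hr
      intro hcontra
      have h2 := congrArg (fun x : ℕ × ℕ => x.1) ((Sum.inl.injEq _ _).mp hcontra)
      simp at h2
      omega
    · rintro r hr
      intro hcontra
      exact Sum.inr_ne_inl hcontra
  have hprod : (∏ j ∈ A, f' j)
      = fun ω => Wfun (fun a b => S a b ω) (fun a b => R a b ω) n h := by
    funext ω
    rw [Finset.prod_apply]
    rw [hA, Finset.prod_union]
    · rw [Finset.prod_image (by intro x _ y _ hxy; exact congrArg Prod.fst ((Sum.inl.injEq _ _).mp hxy)),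
        Finset.prod_image (by intro x _ y _ hxy; exact congrArg Prod.fst ((Sum.inr.injEq _ _).mp hxy))]
      rw [Wfun, ← Finset.prod_mul_distrib]
      apply Finset.prod_congr rfl
      intro r _
      simp only [hf', hg, Function.comp_apply, Sum.elim_inl, Sum.elim_inr]
    · rw [Finset.disjoint_left]
      rintro x hx hy
      simp only [Finset.mem_image, Finset.mem_range] at hx hy
      obtain ⟨r, _, rfl⟩ := hx
      obtain ⟨r', _, h'⟩ := hy
      exact Sum.inr_ne_inl h'
  have := hindep'.indepFun_finsetProd_of_notMem hf'meas hnotmem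
  rw [hprod] at this
  convert this using 1
  rfl


lemma prod_mu_tendsto_zero (δ α : ℝ) (hδ0 : 0 ≤ δ) (hδ1 : δ < 1) (hα : -δ < α) :
    Tendsto (fun n => ∏ r ∈ range n,
      ((α + δ * (r + 1)) / ((1 - δ) + (α + δ * (r + 1))))) atTop (𝓝 0) := by
  set a : ℝ := 1 - δ with ha
  have ha0 : 0 < a := by simp [ha]; linarith
  have hα1 : -1 < α := by linarith
  set c : ℕ → ℝ := fun r => 1 + α + δ * r with hc
  have hc0 : ∀ r : ℕ, 0 < c r := by
    intro r
    have : (0:ℝ) ≤ δ * r := by positivity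
    simp only [hc]; linarith
  have hce : ∀ r : ℕ, (1 - δ) + (α + δ * (r + 1)) = c r := by
    intro r; simp only [hc]; ring
  have hmu_nonneg : ∀ r : ℕ, 0 ≤ (α + δ * (r + 1)) / ((1 - δ) + (α + δ * (r + 1))) := by
    intro r
    apply div_nonneg
    · have : (0:ℝ) ≤ δ * r := by positivity
      have : (0:ℝ) ≤ δ * (r+1) := by positivity
      linarith
    · rw [hce]; exact (hc0 r).le
  have hmu_le : ∀ r : ℕ, (α + δ * (r + 1)) / ((1 - δ) + (α + δ * (r + 1)))
      ≤ Real.exp (-(a / c r)) := by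
    intro r
    have h1 : (α + δ * (r + 1)) / ((1 - δ) + (α + δ * (r + 1))) = 1 - a / c r := by
      rw [hce]
      rw [eq_sub_iff_add_eq, ← add_div, div_eq_one_iff_eq (ne_of_gt (hc0 r))]
      simp only [hc, ha]
      push_cast
      ring
    rw [h1]
    have := Real.add_one_le_exp (-(a / c r))
    linarith
  have hbound : ∀ r : ℕ, a / (2 + α) * (1 / (r + 1)) ≤ a / c r := by
    intro r
    have h2α : (0:ℝ) < 2 + α := by linarith
    have hr1 : (0:ℝ) < (r:ℝ) + 1 := by positivity
    rw [div_mul_div_comm, mul_one]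
    apply div_le_div_of_nonneg_left ha0.le (hc0 r)
    have hδr : δ * r ≤ 1 * r := by
      apply mul_le_mul_of_nonneg_right (by linarith) (Nat.cast_nonneg r)
    have h3 : (0:ℝ) ≤ (1 + α) * r := mul_nonneg (by linarith) (Nat.cast_nonneg r)
    calc c r = 1 + α + δ * r := rfl
    _ ≤ (2 + α) * (r + 1) := by nlinarith
  -- limit of upper bound
  have hT : Tendsto (fun n => ∑ r ∈ range n, (1:ℝ) / (r + 1)) atTop atTop :=
    Real.tendsto_sum_range_one_div_nat_succ_atTop
  have hconst : (0:ℝ) < a / (2 + α) := by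
    apply div_pos ha0; linarith
  have hT2 : Tendsto (fun n => a / (2 + α) * ∑ r ∈ range n, (1:ℝ) / (r + 1)) atTop atTop :=
    hT.const_mul_atTop hconst
  have hexp : Tendsto (fun n => Real.exp (-(a / (2 + α) * ∑ r ∈ range n, (1:ℝ) / (r + 1))))
      atTop (𝓝 0) :=
    Real.tendsto_exp_atBot.comp (tendsto_neg_atTop_atBot.comp hT2)
  apply squeeze_zero
  · intro n
    exact Finset.prod_nonneg fun r _ => hmu_nonneg r
  · intro n
    calc ∏ r ∈ range n, ((α + δ * (r + 1)) / ((1 - δ) + (α + δ * (r + 1))))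
        ≤ ∏ r ∈ range n, Real.exp (-(a / c r)) :=
          Finset.prod_le_prod (fun r _ => hmu_nonneg r) (fun r _ => hmu_le r)
    _ = Real.exp (∑ r ∈ range n, -(a / c r)) := (Real.exp_sum _ _).symm
    _ ≤ Real.exp (-(a / (2 + α) * ∑ r ∈ range n, (1:ℝ) / (r + 1))) := by
        apply Real.exp_le_exp.mpr
        rw [Finset.mul_sum, ← Finset.sum_neg_distrib]
        apply Finset.sum_le_sum
        intro r _
        have := hbound r
        linarith
  · exact hexp


end AuxLemmas

/-- For `δ ∈ [0,1)`, `α > -δ`, `β > 0`, if the stopping variables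
`S (s,h) ~ Beta(1-δ, α+δ(s+1))` and the right-turn variables `R (s,h) ~ Beta(β,β)` are mutually
independent, then the multiscale stick-breaking weights sum to one almost surely. -/
theorem multiscale_stick_breaking_weights_sum_to_one
    {Ω : Type*} [MeasurableSpace Ω] (P : Measure Ω) [IsProbabilityMeasure P]
    (δ α β : ℝ) (hδ0 : 0 ≤ δ) (hδ1 : δ < 1) (hα : -δ < α) (hβ : 0 < β)
    (S R : ℕ → ℕ → Ω → ℝ)
    (hSmeas : ∀ s h, Measurable (S s h)) (hRmeas : ∀ s h, Measurable (R s h))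
    (hindep : iIndepFun
      (fun i : (ℕ × ℕ) ⊕ (ℕ × ℕ) =>
        Sum.elim (fun p => S p.1 p.2) (fun p => R p.1 p.2) i) P)
    (hS : ∀ s h, 1 ≤ h → h ≤ 2 ^ s →
      Measure.map (S s h) P = _root_.betaMeasure (1 - δ) (α + δ * (s + 1)))
    (hR : ∀ s h, 1 ≤ h → h ≤ 2 ^ s → Measure.map (R s h) P = _root_.betaMeasure β β) :
    ∀ᵐ ω ∂P, ∑' s : ℕ, ∑ h ∈ Finset.Icc 1 (2 ^ s),
      msWeight (fun a b => S a b ω) (fun a b => R a b ω) s h = 1 := by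
  classical
  have ha0 : (0:ℝ) < 1 - δ := by linarith
  have hb0 : ∀ n : ℕ, (0:ℝ) < α + δ * (n + 1) := by
    intro n
    have h1 : (0:ℝ) ≤ δ * n := by positivity
    nlinarith
  -- the a.s. good event
  have hgood : ∀ᵐ ω ∂P, ∀ s h, 1 ≤ h → h ≤ 2 ^ s →
      (S s h ω ∈ Set.Icc (0:ℝ) 1 ∧ R s h ω ∈ Set.Icc (0:ℝ) 1) := by
    rw [ae_all_iff]
    intro s
    rw [ae_all_iff]
    intro h
    by_cases hcase : 1 ≤ h ∧ h ≤ 2 ^ s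
    · have hkey : ∀ (X : Ω → ℝ) (aa bb : ℝ), Measurable X →
          Measure.map X P = _root_.betaMeasure aa bb → ∀ᵐ ω ∂P, X ω ∈ Set.Icc (0:ℝ) 1 := by
        intro X aa bb hXm hmap
        have h0 : P (X ⁻¹' (Set.Icc (0:ℝ) 1)ᶜ) = 0 := by
          rw [← Measure.map_apply hXm measurableSet_Icc.compl, hmap]
          apply betaMeasure_compl _ _ measurableSet_Icc.compl
          rw [Set.eq_empty_iff_forall_notMem]
          rintro x ⟨hc, hIoo⟩
          exact hc ⟨le_of_lt hIoo.1, le_of_lt hIoo.2⟩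
        rw [ae_iff]
        exact h0
      filter_upwards [hkey (S s h) _ _ (hSmeas s h) (hS s h hcase.1 hcase.2),
        hkey (R s h) _ _ (hRmeas s h) (hR s h hcase.1 hcase.2)] with ω h1 h2 _ _
      exact ⟨h1, h2⟩
    · filter_upwards with ω h1 h2
      exact absurd ⟨h1, h2⟩ hcase
  -- notation
  set WF : ℕ → ℕ → Ω → ℝ :=
    fun n h ω => Wfun (fun a b => S a b ω) (fun a b => R a b ω) n h with hWFdef
  set F : ℕ → Ω → ℝ :=
    fun n ω => Lsum (fun a b => S a b ω) (fun a b => R a b ω) n with hFdef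
  have hWFmeas : ∀ n h, Measurable (WF n h) := fun n h =>
    Wfun_measurable S R hSmeas hRmeas n h
  have hFmeas : ∀ n, Measurable (F n) := by
    intro n
    apply Finset.measurable_sum
    intro h _
    exact hWFmeas n h
  -- integrability
  have hWFbd : ∀ n h, 1 ≤ h → h ≤ 2 ^ n → ∀ᵐ ω ∂P, ‖WF n h ω‖ ≤ 1 := by
    intro n h h1 h2
    filter_upwards [hgood] with ω hg
    have := Wfun_mem (S := fun a b => S a b ω) (R := fun a b => R a b ω)
      (fun s hh u v => hg s hh u v) h1 h2
    rw [Real.norm_eq_abs, abs_of_nonneg this.1]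
    exact this.2
  have hWFint : ∀ n h, 1 ≤ h → h ≤ 2 ^ n → Integrable (WF n h) P := by
    intro n h h1 h2
    exact Integrable.mono' (integrable_const 1) (hWFmeas n h).aestronglyMeasurable
      (hWFbd n h h1 h2)
  have hWSint : ∀ n h, 1 ≤ h → h ≤ 2 ^ n →
      Integrable (fun ω => WF n h ω * (1 - S n h ω)) P := by
    intro n h h1 h2
    apply Integrable.mono' (integrable_const 1)
      ((hWFmeas n h).mul (measurable_const.sub (hSmeas n h))).aestronglyMeasurable
    filter_upwards [hgood] with ω hg
    have hW := Wfun_mem (S := fun a b => S a b ω) (R := fun a b => R a b ω)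
      (fun s hh u v => hg s hh u v) h1 h2
    have hs := (hg n h h1 h2).1
    show ‖WF n h ω * (1 - S n h ω)‖ ≤ 1
    rw [Real.norm_eq_abs, abs_of_nonneg (by nlinarith [hW.1, hs.2] : 
      (0:ℝ) ≤ WF n h ω * (1 - S n h ω))]
    nlinarith [hW.1, hW.2, hs.1, hs.2]
  have hFint : ∀ n, Integrable (F n) P := by
    intro n
    apply integrable_finset_sum
    intro h hh
    rw [Finset.mem_Icc] at hh
    exact hWFint n h hh.1 hh.2
  -- mean of 1 - S
  have hmean : ∀ n h, 1 ≤ h → h ≤ 2 ^ n →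
      ∫ ω, (1 - S n h ω) ∂P
        = (α + δ * (n + 1)) / ((1 - δ) + (α + δ * (n + 1))) := by
    intro n h h1 h2
    have e1 : ∫ x, (1 - x) ∂(Measure.map (S n h) P) = ∫ ω, (1 - S n h ω) ∂P :=
      integral_map (φ := S n h) (f := fun x => 1 - x) (hSmeas n h).aemeasurable
        (continuous_const.sub continuous_id').aestronglyMeasurable
    rw [← e1, hS n h h1 h2, betaMeasure_integral_one_sub ha0 (hb0 n)]
  -- expectation recursion
  have hstep : ∀ n, ∫ ω, F (n + 1) ω ∂P
      = ((α + δ * (n + 1)) / ((1 - δ) + (α + δ * (n + 1)))) * ∫ ω, F n ω ∂P := by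
    intro n
    have e1 : ∀ ω, F (n + 1) ω = ∑ h ∈ Finset.Icc 1 (2 ^ n), WF n h ω * (1 - S n h ω) := by
      intro ω
      exact Lsum_succ _ _ n
    have e2 : ∫ ω, F (n + 1) ω ∂P
        = ∑ h ∈ Finset.Icc 1 (2 ^ n), ∫ ω, WF n h ω * (1 - S n h ω) ∂P := by
      rw [integral_congr_ae (Filter.Eventually.of_forall e1)]
      apply integral_finset_sum
      intro h hh
      rw [Finset.mem_Icc] at hh
      exact hWSint n h hh.1 hh.2
    have e3 : ∀ h, 1 ≤ h → h ≤ 2 ^ n →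
        ∫ ω, WF n h ω * (1 - S n h ω) ∂P
          = (∫ ω, WF n h ω ∂P) * ((α + δ * (n + 1)) / ((1 - δ) + (α + δ * (n + 1)))) := by
      intro h h1 h2
      have hind := indep_W_S S R hSmeas hRmeas hindep n h
      have hmul := hind.integral_mul_eq_mul_integral (hWFmeas n h).aestronglyMeasurable
        (measurable_const.sub (hSmeas n h)).aestronglyMeasurable
      have hmul2 : ∫ ω, WF n h ω * (1 - S n h ω) ∂P
          = (∫ ω, WF n h ω ∂P) * ∫ ω, (1 - S n h ω) ∂P := hmul
      rw [hmul2, hmean n h h1 h2]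
    rw [e2]
    have e4 : ∑ h ∈ Finset.Icc 1 (2 ^ n), ∫ ω, WF n h ω * (1 - S n h ω) ∂P
        = ∑ h ∈ Finset.Icc 1 (2 ^ n), (∫ ω, WF n h ω ∂P)
            * ((α + δ * (n + 1)) / ((1 - δ) + (α + δ * (n + 1)))) := by
      apply Finset.sum_congr rfl
      intro h hh
      rw [Finset.mem_Icc] at hh
      exact e3 h hh.1 hh.2
    rw [e4, ← Finset.sum_mul, mul_comm]
    congr 1
    rw [hFdef]
    simp only [Lsum]
    rw [integral_finset_sum]
    intro h hh
    rw [Finset.mem_Icc] at hh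
    exact hWFint n h hh.1 hh.2
  have hbase : ∫ ω, F 0 ω ∂P = 1 := by
    have : ∀ ω, F 0 ω = 1 := fun ω => Lsum_zero _ _
    rw [integral_congr_ae (Filter.Eventually.of_forall this)]
    simp
  have hEn : ∀ n, ∫ ω, F n ω ∂P
      = ∏ r ∈ Finset.range n, ((α + δ * (r + 1)) / ((1 - δ) + (α + δ * (r + 1)))) := by
    intro n
    induction n with
    | zero => simpa using hbase
    | succ n ih =>
      rw [hstep n, ih, Finset.prod_range_succ, mul_comm]
  have hE0 : Filter.Tendsto (fun n => ∫ ω, F n ω ∂P) Filter.atTop (nhds 0) := by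
    simp only [hEn]
    exact prod_mu_tendsto_zero δ α hδ0 hδ1 hα
  -- Fatou argument
  set A : ℕ → Ω → ℝ≥0∞ := fun n ω => ENNReal.ofReal (F n ω) with hAdef
  have hAmeas : ∀ n, Measurable (A n) := fun n => (hFmeas n).ennreal_ofReal
  have hFnonneg : ∀ᵐ ω ∂P, ∀ n, 0 ≤ F n ω := by
    filter_upwards [hgood] with ω hg n
    exact Lsum_nonneg (fun s hh u v => hg s hh u v) n
  have hlin : ∀ n, ∫⁻ ω, A n ω ∂P = ENNReal.ofReal (∫ ω, F n ω ∂P) := by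
    intro n
    rw [← ofReal_integral_eq_lintegral_ofReal (hFint n)]
    filter_upwards [hFnonneg] with ω hω
    exact hω n
  have hLtend : Filter.Tendsto (fun n => ∫⁻ ω, A n ω ∂P) Filter.atTop (nhds 0) := by
    simp only [hlin]
    have := (ENNReal.tendsto_ofReal hE0)
    simpa using this
  have hliminf0 : ∫⁻ ω, Filter.liminf (fun n => A n ω) Filter.atTop ∂P = 0 := by
    apply le_antisymm _ (zero_le)
    calc ∫⁻ ω, Filter.liminf (fun n => A n ω) Filter.atTop ∂P
        ≤ Filter.liminf (fun n => ∫⁻ ω, A n ω ∂P) Filter.atTop := lintegral_liminf_le hAmeas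
    _ = 0 := hLtend.liminf_eq
  have hae0 : ∀ᵐ ω ∂P, Filter.liminf (fun n => A n ω) Filter.atTop = 0 := by
    rw [lintegral_eq_zero_iff (Measurable.liminf hAmeas)] at hliminf0
    filter_upwards [hliminf0] with ω hω
    exact hω
  -- conclusion
  filter_upwards [hgood, hae0, hFnonneg] with ω hg hl0 hFnn
  have hganti : ∀ n, F (n + 1) ω ≤ F n ω := by
    intro n
    exact Lsum_succ_le (fun s hh u v => hg s hh u v) n
  have hAanti : Antitone (fun n => A n ω) := by
    apply antitone_nat_of_succ_le
    intro n
    exact ENNReal.ofReal_le_ofReal (hganti n)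
  have htendA : Filter.Tendsto (fun n => A n ω) Filter.atTop (nhds (⨅ n, A n ω)) :=
    tendsto_atTop_iInf hAanti
  have hinf0 : (⨅ n, A n ω) = 0 := by
    rw [← hl0]
    exact (htendA.liminf_eq).symm
  rw [hinf0] at htendA
  have htendF : Filter.Tendsto (fun n => F n ω) Filter.atTop (nhds 0) := by
    have h2 := (ENNReal.tendsto_toReal (by simp : (0:ℝ≥0∞) ≠ ⊤)).comp htendA
    simp only [ENNReal.toReal_zero] at h2
    apply h2.congr
    intro n
    simp only [Function.comp_apply, hAdef]
    exact ENNReal.toReal_ofReal (hFnn n)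
  have htendPartial : Filter.Tendsto
      (fun n => ∑ s ∈ Finset.range n, ∑ h ∈ Finset.Icc 1 (2 ^ s),
        msWeight (fun a b => S a b ω) (fun a b => R a b ω) s h)
      Filter.atTop (nhds 1) := by
    have : ∀ n, ∑ s ∈ Finset.range n, ∑ h ∈ Finset.Icc 1 (2 ^ s),
        msWeight (fun a b => S a b ω) (fun a b => R a b ω) s h = 1 - F n ω := by
      intro n
      exact partial_sum_eq _ _ n
    simp only [this]
    have hone : Filter.Tendsto (fun _ : ℕ => (1:ℝ)) Filter.atTop (nhds 1) :=
      tendsto_const_nhds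
    have := hone.sub htendF
    simpa using this
  have hsummable : Summable (fun s => ∑ h ∈ Finset.Icc 1 (2 ^ s),
      msWeight (fun a b => S a b ω) (fun a b => R a b ω) s h) := by
    apply summable_of_sum_range_le (c := 1)
    · intro s
      apply Finset.sum_nonneg
      intro h hh
      rw [Finset.mem_Icc] at hh
      exact msWeight_nonneg (fun s' hh' u v => hg s' hh' u v) hh.1 hh.2
    · intro n
      rw [partial_sum_eq]
      linarith [hFnn n]
  exact tendsto_nhds_unique hsummable.hasSum.tendsto_sum_nat htendPartial
end

section
/- Let δ ∈ [0,1), α > −δ and β > 0. Let G₀ be a probability measure on ℝ and, for each s ∈ ℕ, let {Θ_{s,h} : 1 ≤ h ≤ 2^s} be measurable sets with G₀(Θ_{s,h}) = 2^{−s} that are pairwise disjoint within each scale s and cover ℝ up to a G₀-null set. Let {S_{s,h}}, {R_{s,h}} and {μ_{s,h}} be mutually independent random variables, with S_{s,h} ~ Beta(1−δ, α+δ(s+1)), R_{s,h} ~ Beta(β,β), and μ_{s,h} distributed according to the normalized restriction of G₀ to Θ_{s,h} (i.e., its law is 2^s · G₀ restricted to Θ_{s,h}). Let π_{s,h} be the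 multiscale stick-breaking weights built from the S and R variables and define the random measure G = ∑_{s=0}^∞ ∑_{h=1}^{2^s} π_{s,h} δ_{μ_{s,h}}. Then for every measurable set A ⊆ ℝ, E[G(A)] = G₀(A), i.e., E[∑_{s=0}^∞ ∑_{h=1}^{2^s} π_{s,h} 1{μ_{s,h} ∈ A}] = G₀(A). -/
open MeasureTheory ProbabilityTheory Filter
open scoped ENNReal Topology

namespace MSAux

noncomputable def B (a b : ℝ) : ℝ := ∫ y in Set.Ioo (0:ℝ) 1, y ^ (a - 1) * (1 - y) ^ (b - 1)

lemma integrableOn_betaFn {a b : ℝ} (ha : 0 < a) (hb : 0 < b) :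
    IntegrableOn (fun y : ℝ => y ^ (a - 1) * (1 - y) ^ (b - 1)) (Set.Ioo 0 1) volume := by
  have h := Complex.betaIntegral_convergent (u := a) (v := b) (by simpa using ha) (by simpa using hb)
  have h2 : IntegrableOn (fun x : ℝ => (x:ℂ) ^ ((a:ℂ) - 1) * ((1:ℂ) - x) ^ ((b:ℂ) - 1))
      (Set.Ioc (0:ℝ) 1) volume := by
    rw [← intervalIntegrable_iff_integrableOn_Ioc_of_le (by norm_num)]
    exact h
  have h3 := h2.mono_set Set.Ioo_subset_Ioc_self
  have h4 : IntegrableOn (fun x : ℝ =>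
      (((x ^ (a-1) * (1-x) ^ (b-1) : ℝ)) : ℂ)) (Set.Ioo (0:ℝ) 1) volume := by
    apply h3.congr_fun _ measurableSet_Ioo
    intro x hx
    dsimp only
    rw [Complex.ofReal_mul, Complex.ofReal_cpow hx.1.le, Complex.ofReal_cpow (by linarith [hx.2])]
    push_cast
    ring
  have h5 : IntegrableOn (fun x : ℝ =>
      Complex.re (((x ^ (a-1) * (1-x) ^ (b-1) : ℝ)) : ℂ)) (Set.Ioo (0:ℝ) 1) volume := h4.re
  apply h5.congr_fun _ measurableSet_Ioo
  intro x _
  simp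

lemma betaFn_nonneg {a b : ℝ} {y : ℝ} (hy : y ∈ Set.Ioo (0:ℝ) 1) :
    0 ≤ y ^ (a - 1) * (1 - y) ^ (b - 1) :=
  mul_nonneg (Real.rpow_nonneg hy.1.le _) (Real.rpow_nonneg (by linarith [hy.2]) _)

lemma B_eq_Gamma {a b : ℝ} (ha : 0 < a) (hb : 0 < b) :
    B a b = Real.Gamma a * Real.Gamma b / Real.Gamma (a + b) := by
  have key : Complex.betaIntegral a b = ((B a b : ℝ) : ℂ) := by
    rw [Complex.betaIntegral]
    have : ∀ᵐ x : ℝ, x ∈ Set.uIoc (0:ℝ) 1 →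
        (x:ℂ) ^ ((a:ℂ) - 1) * ((1:ℂ) - x) ^ ((b:ℂ) - 1)
          = (((x ^ (a-1) * (1-x) ^ (b-1) : ℝ)) : ℂ) := by
      have hone : ∀ᵐ x : ℝ, x ≠ (1:ℝ) := by
        refine ae_iff.2 ?_
        simp [not_not]
      filter_upwards [hone] with x hx1 hx
      rw [Set.uIoc_of_le (by norm_num : (0:ℝ) ≤ 1)] at hx
      have hxlt : x < 1 := lt_of_le_of_ne hx.2 hx1
      rw [Complex.ofReal_mul, Complex.ofReal_cpow hx.1.le, Complex.ofReal_cpow (by linarith)]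
      push_cast
      ring
    rw [intervalIntegral.integral_congr_ae this]
    rw [intervalIntegral.integral_ofReal]
    congr 1
    rw [intervalIntegral.integral_of_le (by norm_num : (0:ℝ) ≤ 1),
      MeasureTheory.integral_Ioc_eq_integral_Ioo]
    rfl
  have hG := Complex.Gamma_mul_Gamma_eq_betaIntegral (s := a) (t := b)
    (by simpa using ha) (by simpa using hb)
  rw [key] at hG
  have hab : (0:ℝ) < a + b := by linarith
  have hGab : Real.Gamma (a + b) ≠ 0 := (Real.Gamma_pos_of_pos hab).ne'
  have : ((Real.Gamma a * Real.Gamma b : ℝ) : ℂ) = ((Real.Gamma (a+b) * B a b : ℝ) : ℂ) := by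
    push_cast
    rw [← Complex.Gamma_ofReal, ← Complex.Gamma_ofReal, ← Complex.Gamma_ofReal] at *
    convert hG using 2
    push_cast; ring
  have h2 := Complex.ofReal_inj.1 this
  field_simp
  linarith [h2]

lemma B_pos {a b : ℝ} (ha : 0 < a) (hb : 0 < b) : 0 < B a b := by
  rw [B_eq_Gamma ha hb]
  exact div_pos (mul_pos (Real.Gamma_pos_of_pos ha) (Real.Gamma_pos_of_pos hb))
    (Real.Gamma_pos_of_pos (by linarith))

lemma betaFn_measurable (a b : ℝ) :
    Measurable (fun y : ℝ => y ^ (a - 1) * (1 - y) ^ (b - 1)) := by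
  fun_prop

lemma betaMeasure_def' (a b : ℝ) :
    _root_.betaMeasure a b = (volume.restrict (Set.Ioo (0:ℝ) 1)).withDensity fun x =>
      ENNReal.ofReal (x ^ (a - 1) * (1 - x) ^ (b - 1) / B a b) := rfl

theorem isProbabilityMeasure_betaMeasure {a b : ℝ} (ha : 0 < a) (hb : 0 < b) :
    IsProbabilityMeasure (_root_.betaMeasure a b) := by
  constructor
  rw [betaMeasure_def', withDensity_apply _ MeasurableSet.univ, Measure.restrict_univ]
  have hint : IntegrableOn (fun y : ℝ => y ^ (a - 1) * (1 - y) ^ (b - 1) / B a b)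
      (Set.Ioo 0 1) volume := (integrableOn_betaFn ha hb).div_const _
  have hnn : 0 ≤ᵐ[volume.restrict (Set.Ioo (0:ℝ) 1)]
      fun y : ℝ => y ^ (a - 1) * (1 - y) ^ (b - 1) / B a b := by
    rw [EventuallyLE, ae_restrict_iff' measurableSet_Ioo]
    filter_upwards with y hy
    exact div_nonneg (betaFn_nonneg hy) (B_pos ha hb).le
  rw [← ofReal_integral_eq_lintegral_ofReal hint hnn]
  rw [integral_div]
  have : B a b / B a b = 1 := div_self (B_pos ha hb).ne'
  rw [show (∫ y in Set.Ioo (0:ℝ) 1, y ^ (a - 1) * (1 - y) ^ (b - 1)) = B a b from rfl, this]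
  simp

lemma betaMeasure_compl_Ioo (a b : ℝ) : _root_.betaMeasure a b ((Set.Ioo (0:ℝ) 1)ᶜ) = 0 := by
  rw [_root_.betaMeasure, withDensity_apply _ measurableSet_Ioo.compl,
    Measure.restrict_restrict measurableSet_Ioo.compl, Set.compl_inter_self,
    Measure.restrict_empty, lintegral_zero_measure]

lemma integral_betaMeasure_eq {a b : ℝ} (ha : 0 < a) (hb : 0 < b) :
    ∫ x, x ∂_root_.betaMeasure a b = B (a+1) b / B a b := by
  rw [betaMeasure_def']
  have hmeas : Measurable (fun y : ℝ =>
      (y ^ (a - 1) * (1 - y) ^ (b - 1) / B a b).toNNReal) :=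
    ((betaFn_measurable a b).div_const _).real_toNNReal
  have hco : (fun x : ℝ => ENNReal.ofReal (x ^ (a - 1) * (1 - x) ^ (b - 1) / B a b))
      = fun x : ℝ => ((x ^ (a - 1) * (1 - x) ^ (b - 1) / B a b).toNNReal : ℝ≥0∞) := rfl
  rw [hco, integral_withDensity_eq_integral_smul hmeas]
  have : ∫ x in Set.Ioo (0:ℝ) 1, (x ^ (a - 1) * (1 - x) ^ (b - 1) / B a b).toNNReal • x
      = ∫ x in Set.Ioo (0:ℝ) 1, x ^ ((a+1) - 1) * (1 - x) ^ (b - 1) / B a b := by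
    apply setIntegral_congr_fun measurableSet_Ioo
    intro x hx
    dsimp only
    have h1 : ((x ^ (a - 1) * (1 - x) ^ (b - 1) / B a b).toNNReal : ℝ)
        = x ^ (a - 1) * (1 - x) ^ (b - 1) / B a b :=
      Real.coe_toNNReal _ (div_nonneg (betaFn_nonneg hx) (B_pos ha hb).le)
    rw [NNReal.smul_def, smul_eq_mul, h1]
    rw [show (a+1) - 1 = (a-1) + 1 by ring, Real.rpow_add hx.1, Real.rpow_one]
    ring
  rw [this, integral_div]
  rfl

lemma integral_betaMeasure {a b : ℝ} (ha : 0 < a) (hb : 0 < b) :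
    ∫ x, x ∂_root_.betaMeasure a b = a / (a + b) := by
  rw [integral_betaMeasure_eq ha hb, B_eq_Gamma (by linarith) hb, B_eq_Gamma ha hb]
  have h1 : Real.Gamma (a + 1) = a * Real.Gamma a := Real.Gamma_add_one ha.ne'
  have h2 : Real.Gamma (a + 1 + b) = (a + b) * Real.Gamma (a + b) := by
    rw [show a + 1 + b = (a + b) + 1 by ring, Real.Gamma_add_one (by positivity)]
  rw [h1, h2]
  have g1 := Real.Gamma_pos_of_pos ha
  have g2 := Real.Gamma_pos_of_pos hb
  have g3 := Real.Gamma_pos_of_pos (show (0:ℝ) < a + b by linarith)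
  field_simp

section
variable {Ω : Type*} [MeasurableSpace Ω] {P : Measure Ω}

lemma ae_mem_Ioo_of_betaLaw {f : Ω → ℝ} (hf : Measurable f) {a b : ℝ}
    (h : Measure.map f P = _root_.betaMeasure a b) : ∀ᵐ ω ∂P, f ω ∈ Set.Ioo (0:ℝ) 1 := by
  have h0 : P (f ⁻¹' (Set.Ioo (0:ℝ) 1)ᶜ) = 0 := by
    rw [← Measure.map_apply hf measurableSet_Ioo.compl, h, betaMeasure_compl_Ioo]
  rw [ae_iff]
  convert h0 using 2
  rfl

lemma expectation_of_betaLaw [IsProbabilityMeasure P] {f : Ω → ℝ} (hf : Measurable f)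
    {a b : ℝ} (ha : 0 < a) (hb : 0 < b)
    (h : Measure.map f P = _root_.betaMeasure a b) : ∫ ω, f ω ∂P = a / (a + b) := by
  have h1 : ∫ x, x ∂(Measure.map f P) = ∫ ω, f ω ∂P :=
    integral_map hf.aemeasurable aestronglyMeasurable_id
  rw [← h1, h, integral_betaMeasure ha hb]

lemma integrable_of_ae_bound [IsProbabilityMeasure P] {f : Ω → ℝ}
    (hm : AEStronglyMeasurable f P) (h : ∀ᵐ ω ∂P, ‖f ω‖ ≤ 1) : Integrable f P :=
  Integrable.mono' (integrable_const 1) hm h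

lemma integrable_of_betaLaw [IsProbabilityMeasure P] {f : Ω → ℝ} (hf : Measurable f)
    {a b : ℝ} (h : Measure.map f P = _root_.betaMeasure a b) : Integrable f P := by
  refine integrable_of_ae_bound hf.aestronglyMeasurable ?_
  filter_upwards [ae_mem_Ioo_of_betaLaw hf h] with ω hω
  rw [Real.norm_eq_abs, abs_le]
  constructor <;> [linarith [hω.1]; linarith [hω.2]]

lemma integral_finset_prod_of_iIndep [IsProbabilityMeasure P] {ι : Type*} {Y : ι → Ω → ℝ}
    (hY : iIndepFun Y P)
    (hmeas : ∀ i, Measurable (Y i)) (t : Finset ι) (hint : ∀ i ∈ t, Integrable (Y i) P) :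
    Integrable (∏ i ∈ t, Y i) P ∧
      ∫ ω, (∏ i ∈ t, Y i) ω ∂P = ∏ i ∈ t, ∫ ω, Y i ω ∂P := by
  classical
  induction t using Finset.induction with
  | empty =>
    constructor
    · exact integrable_const (1:ℝ)
    · simp
  | @insert i t hi ih =>
    obtain ⟨ih1, ih2⟩ := ih (fun j hj => hint j (Finset.mem_insert_of_mem hj))
    have hii : Integrable (Y i) P := hint i (Finset.mem_insert_self i t)
    have hIndep : IndepFun (∏ j ∈ t, Y j) (Y i) P :=
      hY.indepFun_finsetProd_of_notMem hmeas hi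
    have hmul : Integrable ((∏ j ∈ t, Y j) * Y i) P := hIndep.integrable_mul ih1 hii
    have heq : (∏ j ∈ insert i t, Y j) = (∏ j ∈ t, Y j) * Y i := by
      rw [Finset.prod_insert hi, mul_comm]
    constructor
    · rw [heq]; exact hmul
    · rw [heq, hIndep.integral_mul_eq_mul_integral ih1.aestronglyMeasurable hii.aestronglyMeasurable, ih2, Finset.prod_insert hi]
      ring

end

lemma anc_one_le (s h r : ℕ) : 1 ≤ anc s h r := Nat.le_add_left 1 _

lemma anc_le (s h r : ℕ) (hr : r ≤ s) (hh2 : h ≤ 2 ^ s) : anc s h r ≤ 2 ^ r := by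
  have h1 : h - 1 < 2 ^ s := by
    have := Nat.one_le_two_pow (n := s)
    omega
  have h2 : (h - 1) / 2 ^ (s - r) < 2 ^ r := by
    rw [Nat.div_lt_iff_lt_mul (pow_pos (by norm_num) _)]
    calc h - 1 < 2 ^ s := h1
    _ ≤ 2 ^ r * 2 ^ (s - r) := by rw [← pow_add]; apply Nat.pow_le_pow_right <;> omega
  unfold anc; omega

section Node
variable {Ω : Type*} [MeasurableSpace Ω] {P : Measure Ω} [IsProbabilityMeasure P]
  {δ α β : ℝ} {G0 : Measure ℝ} {Θ : ℕ → ℕ → Set ℝ} {S R μloc : ℕ → ℕ → Ω → ℝ}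
  {A : Set ℝ}

lemma node_integral
    (hδ0 : 0 ≤ δ) (hδ1 : δ < 1) (hα : -δ < α) (hβ : 0 < β)
    (hSmeas : ∀ s h, Measurable (S s h)) (hRmeas : ∀ s h, Measurable (R s h))
    (hμmeas : ∀ s h, Measurable (μloc s h))
    (hindep : iIndepFun
      (fun i : ((ℕ × ℕ) ⊕ (ℕ × ℕ)) ⊕ (ℕ × ℕ) =>
        Sum.elim (Sum.elim (fun p => S p.1 p.2) (fun p => R p.1 p.2))
          (fun p => μloc p.1 p.2) i) P)
    (hS : ∀ s h, 1 ≤ h → h ≤ 2 ^ s →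
      Measure.map (S s h) P = _root_.betaMeasure (1 - δ) (α + δ * (s + 1)))
    (hR : ∀ s h, 1 ≤ h → h ≤ 2 ^ s → Measure.map (R s h) P = _root_.betaMeasure β β)
    (hμ : ∀ s h, 1 ≤ h → h ≤ 2 ^ s →
      Measure.map (μloc s h) P = (2 ^ s : ℝ≥0∞) • G0.restrict (Θ s h))
    (hA : MeasurableSet A)
    (s h : ℕ) (hh1 : 1 ≤ h) (hh2 : h ≤ 2 ^ s) :
    Integrable (fun ω => msWeight (fun a b => S a b ω) (fun a b => R a b ω) s h *
        Set.indicator A (fun _ => (1 : ℝ)) (μloc s h ω)) P ∧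
    ∫ ω, msWeight (fun a b => S a b ω) (fun a b => R a b ω) s h *
        Set.indicator A (fun _ => (1 : ℝ)) (μloc s h ω) ∂P
      = ((1 - δ) / (1 + α + δ * s)) *
        (∏ r ∈ Finset.range s, ((α + δ * (r + 1)) / (1 + α + δ * r))) *
        (G0 (A ∩ Θ s h)).toReal := by
  classical
  have hδ' : (0:ℝ) < 1 - δ := by linarith
  have hαδ : (0:ℝ) < α + δ := by linarith
  have hb : ∀ r : ℕ, (0:ℝ) < α + δ * (r + 1) := by
    intro r
    have : δ * 1 ≤ δ * (r + 1) := by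
      apply mul_le_mul_of_nonneg_left _ hδ0
      push_cast; linarith [Nat.cast_nonneg (α := ℝ) r]
    nlinarith
  have hD : ∀ r : ℕ, (0:ℝ) < 1 + α + δ * r := by
    intro r
    have : 0 ≤ δ * r := by positivity
    nlinarith
  -- the indexed family and the transformed family
  set X : (((ℕ × ℕ) ⊕ (ℕ × ℕ)) ⊕ (ℕ × ℕ)) → Ω → ℝ :=
    fun i => Sum.elim (Sum.elim (fun p => S p.1 p.2) (fun p => R p.1 p.2))
      (fun p => μloc p.1 p.2) i with hX
  set f : (((ℕ × ℕ) ⊕ (ℕ × ℕ)) ⊕ (ℕ × ℕ)) → ℝ → ℝ :=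
    fun i => Sum.elim (Sum.elim
      (fun p x => if p = (s, h) then x else 1 - x)
      (fun p x => if anc s h (p.1 + 1) = 2 * anc s h p.1 then x else 1 - x))
      (fun _ x => Set.indicator A (fun _ => (1:ℝ)) x) i with hf
  set Y : (((ℕ × ℕ) ⊕ (ℕ × ℕ)) ⊕ (ℕ × ℕ)) → Ω → ℝ := fun i => f i ∘ X i with hY
  have hfmeas : ∀ i, Measurable (f i) := by
    rintro ((p | p) | p)
    · simp only [hf, Sum.elim_inl]
      split_ifs <;> fun_prop
    · simp only [hf, Sum.elim_inl, Sum.elim_inr]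
      split_ifs <;> fun_prop
    · simp only [hf, Sum.elim_inr]
      exact measurable_const.indicator hA
  have hXmeas : ∀ i, Measurable (X i) := by
    rintro ((p | p) | p)
    · exact hSmeas p.1 p.2
    · exact hRmeas p.1 p.2
    · exact hμmeas p.1 p.2
  have hYindep : iIndepFun Y P := hindep.comp f hfmeas
  have hYmeas : ∀ i, Measurable (Y i) := fun i => (hfmeas i).comp (hXmeas i)
  -- the finite index set
  set tS : Finset (((ℕ × ℕ) ⊕ (ℕ × ℕ)) ⊕ (ℕ × ℕ)) :=
    (Finset.range s).image (fun r => Sum.inl (Sum.inl (r, anc s h r))) with htS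
  set tR : Finset (((ℕ × ℕ) ⊕ (ℕ × ℕ)) ⊕ (ℕ × ℕ)) :=
    (Finset.range s).image (fun r => Sum.inl (Sum.inr (r, anc s h r))) with htR
  set t : Finset (((ℕ × ℕ) ⊕ (ℕ × ℕ)) ⊕ (ℕ × ℕ)) :=
    insert (Sum.inl (Sum.inl (s, h))) (insert (Sum.inr (s, h)) (tS ∪ tR)) with ht
  have hmem1 : (Sum.inl (Sum.inl (s, h)) : ((ℕ × ℕ) ⊕ (ℕ × ℕ)) ⊕ (ℕ × ℕ)) ∉
      insert (Sum.inr (s, h)) (tS ∪ tR) := by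
    simp only [htS, htR, Finset.mem_insert, Finset.mem_union, Finset.mem_image,
      Finset.mem_range]
    push_neg
    refine ⟨by simp, fun r hr => by simp; omega, fun r hr => by simp⟩
  have hmem2 : (Sum.inr (s, h) : ((ℕ × ℕ) ⊕ (ℕ × ℕ)) ⊕ (ℕ × ℕ)) ∉ tS ∪ tR := by
    simp [htS, htR]
  have hdisj : Disjoint tS tR := by
    rw [Finset.disjoint_left]
    intro x hx hx'
    simp only [htS, htR, Finset.mem_image, Finset.mem_range] at hx hx'
    obtain ⟨r, _, rfl⟩ := hx
    obtain ⟨r', _, e⟩ := hx'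
    simp at e
  have hinjS : ∀ x ∈ Finset.range s, ∀ y ∈ Finset.range s,
      (Sum.inl (Sum.inl (x, anc s h x)) : ((ℕ × ℕ) ⊕ (ℕ × ℕ)) ⊕ (ℕ × ℕ)) =
        Sum.inl (Sum.inl (y, anc s h y)) → x = y := by
    intro x _ y _ e
    have e' : (x, anc s h x) = (y, anc s h y) := by simpa using e
    exact (Prod.ext_iff.1 e').1
  have hinjR : ∀ x ∈ Finset.range s, ∀ y ∈ Finset.range s,
      (Sum.inl (Sum.inr (x, anc s h x)) : ((ℕ × ℕ) ⊕ (ℕ × ℕ)) ⊕ (ℕ × ℕ)) =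
        Sum.inl (Sum.inr (y, anc s h y)) → x = y := by
    intro x _ y _ e
    have e' : (x, anc s h x) = (y, anc s h y) := by simpa using e
    exact (Prod.ext_iff.1 e').1
  -- the integrand is the product over t
  have hkey : (fun ω => msWeight (fun a b => S a b ω) (fun a b => R a b ω) s h *
      Set.indicator A (fun _ => (1 : ℝ)) (μloc s h ω)) = ∏ i ∈ t, Y i := by
    funext ω
    rw [Finset.prod_apply, ht, Finset.prod_insert hmem1, Finset.prod_insert hmem2,
      Finset.prod_union hdisj, htS, htR, Finset.prod_image hinjS, Finset.prod_image hinjR]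
    have e1 : ∀ r ∈ Finset.range s,
        Y (Sum.inl (Sum.inl (r, anc s h r))) ω = 1 - S r (anc s h r) ω := by
      intro r hr
      simp only [hY, hf, hX, Function.comp_apply, Sum.elim_inl]
      rw [if_neg]
      intro e
      exact absurd (congrArg Prod.fst e) (by simpa using (Finset.mem_range.1 hr).ne)
    have e2 : ∀ r ∈ Finset.range s,
        Y (Sum.inl (Sum.inr (r, anc s h r))) ω =
          (if anc s h (r + 1) = 2 * anc s h r then R r (anc s h r) ω
           else 1 - R r (anc s h r) ω) := by
      intro r hr
      simp only [hY, hf, hX, Function.comp_apply, Sum.elim_inl, Sum.elim_inr]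
    rw [Finset.prod_congr rfl e1, Finset.prod_congr rfl e2]
    have e3 : Y (Sum.inl (Sum.inl (s, h))) ω = S s h ω := by
      simp [hY, hf, hX]
    have e4 : Y (Sum.inr (s, h)) ω = Set.indicator A (fun _ => (1:ℝ)) (μloc s h ω) := by
      simp [hY, hf, hX]
    rw [e3, e4, msWeight, Finset.prod_mul_distrib]
    ring
  -- integrability of each factor
  have hSae : ∀ r k, 1 ≤ k → k ≤ 2 ^ r → ∀ᵐ ω ∂P, S r k ω ∈ Set.Ioo (0:ℝ) 1 :=
    fun r k h1 h2 => ae_mem_Ioo_of_betaLaw (hSmeas r k) (hS r k h1 h2)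
  have hRae : ∀ r k, 1 ≤ k → k ≤ 2 ^ r → ∀ᵐ ω ∂P, R r k ω ∈ Set.Ioo (0:ℝ) 1 :=
    fun r k h1 h2 => ae_mem_Ioo_of_betaLaw (hRmeas r k) (hR r k h1 h2)
  have hint : ∀ i ∈ t, Integrable (Y i) P := by
    intro i hi
    have hb1 : ∀ {g : Ω → ℝ}, Measurable g → (∀ᵐ ω ∂P, g ω ∈ Set.Ioo (0:ℝ) 1) →
        Integrable (fun ω => 1 - g ω) P := by
      intro g hg hae
      refine Integrable.mono' (integrable_const 1)
        ((measurable_const.sub hg).aestronglyMeasurable) ?_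
      filter_upwards [hae] with ω hω
      rw [Real.norm_eq_abs, abs_le]
      constructor <;> [linarith [hω.2]; linarith [hω.1]]
    simp only [ht, Finset.mem_insert, Finset.mem_union, htS, htR, Finset.mem_image,
      Finset.mem_range] at hi
    rcases hi with rfl | rfl | ⟨r, hr, rfl⟩ | ⟨r, hr, rfl⟩
    · have : Y (Sum.inl (Sum.inl (s, h))) = S s h := by
        funext ω; simp [hY, hf, hX]
      rw [this]
      exact integrable_of_betaLaw (hSmeas s h) (hS s h hh1 hh2)
    · have : Y (Sum.inr (s, h)) = fun ω => Set.indicator A (fun _ => (1:ℝ)) (μloc s h ω) := by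
        funext ω; simp [hY, hf, hX]
      rw [this]
      refine Integrable.mono' (integrable_const 1)
        ((measurable_const.indicator hA).comp (hμmeas s h)).aestronglyMeasurable ?_
      filter_upwards with ω
      rw [Real.norm_eq_abs]
      by_cases hω : μloc s h ω ∈ A <;> simp [Set.indicator_apply, hω]
    · have : Y (Sum.inl (Sum.inl (r, anc s h r))) = fun ω => 1 - S r (anc s h r) ω := by
        funext ω
        simp only [hY, hf, hX, Function.comp_apply, Sum.elim_inl]
        rw [if_neg]
        intro e
        exact absurd (congrArg Prod.fst e) (by simpa using hr.ne)
      rw [this]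
      exact hb1 (hSmeas _ _) (hSae r _ (anc_one_le s h r) (anc_le s h r hr.le hh2))
    · have hval := hRae r (anc s h r) (anc_one_le s h r) (anc_le s h r hr.le hh2)
      by_cases hc : anc s h (r + 1) = 2 * anc s h r
      · have : Y (Sum.inl (Sum.inr (r, anc s h r))) = R r (anc s h r) := by
          funext ω
          simp only [hY, hf, hX, Function.comp_apply, Sum.elim_inl, Sum.elim_inr, if_pos hc]
        rw [this]
        exact integrable_of_betaLaw (hRmeas _ _)
          (hR r _ (anc_one_le s h r) (anc_le s h r hr.le hh2))
      · have : Y (Sum.inl (Sum.inr (r, anc s h r))) = fun ω => 1 - R r (anc s h r) ω := by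
          funext ω
          simp only [hY, hf, hX, Function.comp_apply, Sum.elim_inl, Sum.elim_inr, if_neg hc]
        rw [this]
        exact hb1 (hRmeas _ _) hval
  obtain ⟨hI, hE⟩ := integral_finset_prod_of_iIndep hYindep hYmeas t hint
  constructor
  · rw [hkey]; exact hI
  -- now the value
  have hSval : ∀ r k, 1 ≤ k → k ≤ 2 ^ r →
      ∫ ω, S r k ω ∂P = (1 - δ) / (1 + α + δ * r) := by
    intro r k h1 h2
    rw [expectation_of_betaLaw (hSmeas r k) hδ' (hb r) (hS r k h1 h2)]
    congr 1
    ring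
  have hRval : ∀ r k, 1 ≤ k → k ≤ 2 ^ r → ∫ ω, R r k ω ∂P = 1 / 2 := by
    intro r k h1 h2
    rw [expectation_of_betaLaw (hRmeas r k) hβ hβ (hR r k h1 h2)]
    rw [div_eq_div_iff (by linarith) (by norm_num)]
    ring
  have hcalc : (fun ω => msWeight (fun a b => S a b ω) (fun a b => R a b ω) s h *
      Set.indicator A (fun _ => (1 : ℝ)) (μloc s h ω)) = ∏ i ∈ t, Y i := hkey
  calc ∫ ω, msWeight (fun a b => S a b ω) (fun a b => R a b ω) s h *
        Set.indicator A (fun _ => (1 : ℝ)) (μloc s h ω) ∂P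
      = ∫ ω, (∏ i ∈ t, Y i) ω ∂P := by rw [← hcalc]
    _ = ∏ i ∈ t, ∫ ω, Y i ω ∂P := hE
    _ = ((1 - δ) / (1 + α + δ * s)) *
        (∏ r ∈ Finset.range s, ((α + δ * (r + 1)) / (1 + α + δ * r))) *
        (G0 (A ∩ Θ s h)).toReal := by
      rw [ht, Finset.prod_insert hmem1, Finset.prod_insert hmem2, Finset.prod_union hdisj,
        htS, htR, Finset.prod_image hinjS, Finset.prod_image hinjR]
      have e3 : ∫ ω, Y (Sum.inl (Sum.inl (s, h))) ω ∂P = (1 - δ) / (1 + α + δ * s) := by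
        have : (fun ω => Y (Sum.inl (Sum.inl (s, h))) ω) = S s h := by
          funext ω; simp [hY, hf, hX]
        rw [this]
        exact hSval s h hh1 hh2
      have e4 : ∫ ω, Y (Sum.inr (s, h)) ω ∂P = 2 ^ s * (G0 (A ∩ Θ s h)).toReal := by
        have h1 : (fun ω => Y (Sum.inr (s, h)) ω)
            = fun ω => Set.indicator A (fun _ => (1:ℝ)) (μloc s h ω) := by
          funext ω; simp [hY, hf, hX]
        rw [h1]
        have h2 : ∫ ω, Set.indicator A (fun _ => (1:ℝ)) (μloc s h ω) ∂P
            = ∫ x, Set.indicator A (fun _ => (1:ℝ)) x ∂(Measure.map (μloc s h) P) :=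
          (integral_map (hμmeas s h).aemeasurable
            (measurable_const.indicator hA).aestronglyMeasurable).symm
        rw [h2, hμ s h hh1 hh2, integral_smul_measure]
        have h3 : ∫ x, Set.indicator A (fun _ => (1:ℝ)) x ∂(G0.restrict (Θ s h))
            = ((G0.restrict (Θ s h)) A).toReal := integral_indicator_one hA
        rw [h3, Measure.restrict_apply hA, smul_eq_mul]
        simp
      have e1 : ∀ r ∈ Finset.range s,
          ∫ ω, Y (Sum.inl (Sum.inl (r, anc s h r))) ω ∂P
            = (α + δ * (r + 1)) / (1 + α + δ * r) := by
        intro r hr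
        have hr' := Finset.mem_range.1 hr
        have h1 : (fun ω => Y (Sum.inl (Sum.inl (r, anc s h r))) ω)
            = fun ω => 1 - S r (anc s h r) ω := by
          funext ω
          simp only [hY, hf, hX, Function.comp_apply, Sum.elim_inl]
          rw [if_neg]
          intro e
          exact absurd (congrArg Prod.fst e) (by simpa using hr'.ne)
        rw [h1, integral_sub (integrable_const 1)
          (integrable_of_betaLaw (hSmeas _ _)
            (hS r _ (anc_one_le s h r) (anc_le s h r hr'.le hh2)))]
        rw [hSval r _ (anc_one_le s h r) (anc_le s h r hr'.le hh2)]
        rw [integral_const]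
        simp only [measure_univ, probReal_univ, ENNReal.toReal_one, smul_eq_mul, one_mul]
        rw [eq_div_iff (hD r).ne', sub_mul, div_mul_cancel₀ _ (hD r).ne']
        ring
      have e2 : ∀ r ∈ Finset.range s,
          ∫ ω, Y (Sum.inl (Sum.inr (r, anc s h r))) ω ∂P = 1 / 2 := by
        intro r hr
        have hr' := Finset.mem_range.1 hr
        by_cases hc : anc s h (r + 1) = 2 * anc s h r
        · have h1 : (fun ω => Y (Sum.inl (Sum.inr (r, anc s h r))) ω) = R r (anc s h r) := by
            funext ω
            simp only [hY, hf, hX, Function.comp_apply, Sum.elim_inl, Sum.elim_inr, if_pos hc]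
          rw [h1]
          exact hRval r _ (anc_one_le s h r) (anc_le s h r hr'.le hh2)
        · have h1 : (fun ω => Y (Sum.inl (Sum.inr (r, anc s h r))) ω)
              = fun ω => 1 - R r (anc s h r) ω := by
            funext ω
            simp only [hY, hf, hX, Function.comp_apply, Sum.elim_inl, Sum.elim_inr, if_neg hc]
          rw [h1, integral_sub (integrable_const 1)
            (integrable_of_betaLaw (hRmeas _ _)
              (hR r _ (anc_one_le s h r) (anc_le s h r hr'.le hh2)))]
          rw [hRval r _ (anc_one_le s h r) (anc_le s h r hr'.le hh2), integral_const]
          simp only [measure_univ, probReal_univ, ENNReal.toReal_one, smul_eq_mul, one_mul]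
          norm_num
      rw [e3, e4, Finset.prod_congr rfl e1, Finset.prod_congr rfl e2,
        Finset.prod_const, Finset.card_range]
      have h2s : (2:ℝ)^s * ((1:ℝ)/2)^s = 1 := by rw [← mul_pow]; norm_num
      linear_combination ((1 - δ) / (1 + α + δ * s) *
        (∏ r ∈ Finset.range s, ((α + δ * (r + 1)) / (1 + α + δ * r))) *
        (G0 (A ∩ Θ s h)).toReal) * h2s

end Node
noncomputable def qfun (δ α : ℝ) (s : ℕ) : ℝ :=
  ∏ r ∈ Finset.range s, ((α + δ * (r + 1)) / (1 + α + δ * r))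

section Sum
variable {δ α : ℝ}

lemma hb' (hδ0 : 0 ≤ δ) (hα : -δ < α) : ∀ r : ℕ, (0:ℝ) < α + δ * (r + 1) := by
  intro r
  have h1 : δ * 1 ≤ δ * (r + 1) := by
    apply mul_le_mul_of_nonneg_left _ hδ0
    push_cast
    linarith [Nat.cast_nonneg (α := ℝ) r]
  nlinarith

lemma hD' (hδ0 : 0 ≤ δ) (hδ1 : δ < 1) (hα : -δ < α) : ∀ r : ℕ, (0:ℝ) < 1 + α + δ * r := by
  intro r
  have : (0:ℝ) ≤ δ * r := by positivity
  nlinarith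

lemma frac_eq (hδ0 : 0 ≤ δ) (hδ1 : δ < 1) (hα : -δ < α) (s : ℕ) :
    (α + δ * (s + 1)) / (1 + α + δ * s) = 1 - (1 - δ) / (1 + α + δ * s) := by
  rw [eq_sub_iff_add_eq, ← add_div, div_eq_one_iff_eq (hD' hδ0 hδ1 hα s).ne']
  ring

lemma qfun_pos (hδ0 : 0 ≤ δ) (hδ1 : δ < 1) (hα : -δ < α) (s : ℕ) : 0 < qfun δ α s :=
  Finset.prod_pos fun r _ => div_pos (hb' hδ0 hα r) (hD' hδ0 hδ1 hα r)

lemma p_eq (hδ0 : 0 ≤ δ) (hδ1 : δ < 1) (hα : -δ < α) (s : ℕ) :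
    (1 - δ) / (1 + α + δ * s) * qfun δ α s = qfun δ α s - qfun δ α (s + 1) := by
  have h1 : qfun δ α (s + 1) = qfun δ α s * ((α + δ * (↑s + 1)) / (1 + α + δ * ↑s)) :=
    Finset.prod_range_succ _ s
  rw [h1, frac_eq hδ0 hδ1 hα s]
  ring

lemma qfun_tendsto (hδ0 : 0 ≤ δ) (hδ1 : δ < 1) (hα : -δ < α) :
    Tendsto (qfun δ α) atTop (𝓝 0) := by
  have hD := hD' hδ0 hδ1 hα
  have hb := hb' hδ0 hα
  have hKpos : (0:ℝ) < (1 - δ) / (1 + α + δ) := by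
    apply div_pos (by linarith)
    linarith
  have hexp : ∀ s, qfun δ α s ≤ Real.exp (- ∑ r ∈ Finset.range s, (1 - δ) / (1 + α + δ * r)) := by
    intro s
    have : (- ∑ r ∈ Finset.range s, (1 - δ) / (1 + α + δ * r))
        = ∑ r ∈ Finset.range s, -((1 - δ) / (1 + α + δ * r)) := by
      rw [← Finset.sum_neg_distrib]
    rw [this, Real.exp_sum]
    apply Finset.prod_le_prod
    · intro r _
      exact (div_pos (hb r) (hD r)).le
    · intro r _
      rw [frac_eq hδ0 hδ1 hα r]
      have := Real.add_one_le_exp (-((1 - δ) / (1 + α + δ * r)))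
      linarith
  have hge : ∀ r : ℕ, (1 - δ) / (1 + α + δ) * (1 / (r + 1)) ≤ (1 - δ) / (1 + α + δ * r) := by
    intro r
    rw [div_mul_div_comm, mul_one]
    apply div_le_div_of_nonneg_left (by linarith) (hD r)
    have : (0:ℝ) ≤ r := Nat.cast_nonneg r
    nlinarith
  have hdiv : Tendsto (fun s => ∑ r ∈ Finset.range s, (1 - δ) / (1 + α + δ * r)) atTop atTop := by
    apply tendsto_atTop_mono
      (fun s => Finset.sum_le_sum (fun r (_ : r ∈ Finset.range s) => hge r))
    rw [show (fun s : ℕ => ∑ r ∈ Finset.range s, (1 - δ) / (1 + α + δ) * (1 / (r + 1 : ℝ)))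
      = fun s : ℕ => (1 - δ) / (1 + α + δ) * ∑ r ∈ Finset.range s, (1 / (r + 1 : ℝ))
      from funext fun s => by rw [Finset.mul_sum]]
    exact Tendsto.const_mul_atTop hKpos Real.tendsto_sum_range_one_div_nat_succ_atTop
  have hcomp : Tendsto (fun s => Real.exp (- ∑ r ∈ Finset.range s, (1 - δ) / (1 + α + δ * r)))
      atTop (𝓝 0) :=
    Real.tendsto_exp_atBot.comp (tendsto_neg_atTop_atBot.comp hdiv)
  exact squeeze_zero (fun s => (qfun_pos hδ0 hδ1 hα s).le) hexp hcomp

lemma hasSum_p (hδ0 : 0 ≤ δ) (hδ1 : δ < 1) (hα : -δ < α) :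
    HasSum (fun s : ℕ => (1 - δ) / (1 + α + δ * s) * qfun δ α s) 1 := by
  have hD := hD' hδ0 hδ1 hα
  have hnn : ∀ s : ℕ, 0 ≤ (1 - δ) / (1 + α + δ * s) * qfun δ α s := fun s =>
    mul_nonneg (div_nonneg (by linarith) (hD s).le) (qfun_pos hδ0 hδ1 hα s).le
  rw [hasSum_iff_tendsto_nat_of_nonneg hnn]
  have heq : ∀ n : ℕ, ∑ s ∈ Finset.range n, (1 - δ) / (1 + α + δ * s) * qfun δ α s
      = 1 - qfun δ α n := by
    intro n
    rw [Finset.sum_congr rfl (fun s _ => p_eq hδ0 hδ1 hα s), Finset.sum_range_sub']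
    simp [qfun]
  rw [funext heq]
  have := tendsto_const_nhds (x := (1:ℝ)) (f := atTop (α := ℕ))
  have h2 := this.sub (qfun_tendsto hδ0 hδ1 hα)
  simpa using h2

end Sum
end MSAux

/-- The random discrete measure `G = ∑ π (s,h) δ_{μ (s,h)}` built from the
multiscale stick-breaking weights and locations `μ (s,h)` sampled from the normalized
restriction of `G₀` to the dyadic sets `Θ (s,h)` is centered on `G₀`:
`E[G(A)] = G₀(A)` for every measurable `A`. -/
theorem multiscale_random_measure_centered
    {Ω : Type*} [MeasurableSpace Ω] (P : Measure Ω) [IsProbabilityMeasure P]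
    (δ α β : ℝ) (hδ0 : 0 ≤ δ) (hδ1 : δ < 1) (hα : -δ < α) (hβ : 0 < β)
    (G0 : Measure ℝ) [IsProbabilityMeasure G0]
    (Θ : ℕ → ℕ → Set ℝ)
    (hΘmeas : ∀ s h, MeasurableSet (Θ s h))
    (hΘmass : ∀ s h, 1 ≤ h → h ≤ 2 ^ s → G0 (Θ s h) = (2 ^ s : ℝ≥0∞)⁻¹)
    (hΘdisj : ∀ s h h', 1 ≤ h → h ≤ 2 ^ s → 1 ≤ h' → h' ≤ 2 ^ s → h ≠ h' →
      Disjoint (Θ s h) (Θ s h'))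
    (hΘcover : ∀ s, G0 (Set.univ \ ⋃ h ∈ Finset.Icc 1 (2 ^ s), Θ s h) = 0)
    (S R μloc : ℕ → ℕ → Ω → ℝ)
    (hSmeas : ∀ s h, Measurable (S s h)) (hRmeas : ∀ s h, Measurable (R s h))
    (hμmeas : ∀ s h, Measurable (μloc s h))
    (hindep : iIndepFun
      (fun i : ((ℕ × ℕ) ⊕ (ℕ × ℕ)) ⊕ (ℕ × ℕ) =>
        Sum.elim
          (Sum.elim (fun p => S p.1 p.2) (fun p => R p.1 p.2))
          (fun p => μloc p.1 p.2) i) P)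
    (hS : ∀ s h, 1 ≤ h → h ≤ 2 ^ s →
      Measure.map (S s h) P = _root_.betaMeasure (1 - δ) (α + δ * (s + 1)))
    (hR : ∀ s h, 1 ≤ h → h ≤ 2 ^ s → Measure.map (R s h) P = _root_.betaMeasure β β)
    (hμ : ∀ s h, 1 ≤ h → h ≤ 2 ^ s →
      Measure.map (μloc s h) P = (2 ^ s : ℝ≥0∞) • G0.restrict (Θ s h))
    (A : Set ℝ) (hA : MeasurableSet A) :
    ∫ ω, (∑' s : ℕ, ∑ h ∈ Finset.Icc 1 (2 ^ s),
        msWeight (fun a b => S a b ω) (fun a b => R a b ω) s h *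
          Set.indicator A (fun _ => (1 : ℝ)) (μloc s h ω)) ∂P
      = (G0 A).toReal := by
  classical
  set F : ℕ → Ω → ℝ := fun s ω => ∑ h ∈ Finset.Icc 1 (2 ^ s),
      msWeight (fun a b => S a b ω) (fun a b => R a b ω) s h *
        Set.indicator A (fun _ => (1 : ℝ)) (μloc s h ω) with hFdef
  have hnode := fun (s h : ℕ) (h1 : 1 ≤ h) (h2 : h ≤ 2 ^ s) =>
    MSAux.node_integral hδ0 hδ1 hα hβ hSmeas hRmeas hμmeas hindep hS hR hμ hA s h h1 h2
  have hFint : ∀ s, Integrable (F s) P := by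
    intro s
    apply integrable_finset_sum
    intro h hh
    obtain ⟨h1, h2⟩ := Finset.mem_Icc.1 hh
    exact (hnode s h h1 h2).1
  have hmeasure_sum : ∀ s : ℕ,
      ∑ h ∈ Finset.Icc 1 (2 ^ s), (G0 (A ∩ Θ s h)).toReal = (G0 A).toReal := by
    intro s
    have hd : (↑(Finset.Icc 1 (2 ^ s)) : Set ℕ).PairwiseDisjoint (fun h => A ∩ Θ s h) := by
      intro x hx y hy hxy
      simp only [Finset.coe_Icc, Set.mem_Icc] at hx hy
      exact ((hΘdisj s x y hx.1 hx.2 hy.1 hy.2 hxy).mono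
        Set.inter_subset_right Set.inter_subset_right)
    have h1 : G0 (⋃ h ∈ Finset.Icc 1 (2 ^ s), A ∩ Θ s h)
        = ∑ h ∈ Finset.Icc 1 (2 ^ s), G0 (A ∩ Θ s h) :=
      measure_biUnion_finset hd (fun h _ => hA.inter (hΘmeas s h))
    have h2 : (⋃ h ∈ Finset.Icc 1 (2 ^ s), A ∩ Θ s h)
        = A ∩ ⋃ h ∈ Finset.Icc 1 (2 ^ s), Θ s h := by
      rw [Set.inter_iUnion₂]
    have h4 : G0 (A \ ⋃ h ∈ Finset.Icc 1 (2 ^ s), Θ s h) = 0 :=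
      measure_mono_null (Set.diff_subset_diff_left (Set.subset_univ A)) (hΘcover s)
    have h5 : G0 (A ∩ ⋃ h ∈ Finset.Icc 1 (2 ^ s), Θ s h)
        + G0 (A \ ⋃ h ∈ Finset.Icc 1 (2 ^ s), Θ s h) = G0 A :=
      measure_inter_add_diff A
        (MeasurableSet.biUnion (Finset.countable_toSet _) (fun h _ => hΘmeas s h))
    rw [← ENNReal.toReal_sum (fun h _ => measure_ne_top G0 _), ← h1, h2]
    rw [h4, add_zero] at h5
    rw [h5]
  have hFval : ∀ s, ∫ ω, F s ω ∂P
      = ((1 - δ) / (1 + α + δ * s) * MSAux.qfun δ α s) * (G0 A).toReal := by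
    intro s
    rw [hFdef]
    rw [integral_finset_sum _ (fun h hh =>
      (hnode s h (Finset.mem_Icc.1 hh).1 (Finset.mem_Icc.1 hh).2).1)]
    rw [Finset.sum_congr rfl (fun h hh =>
      (hnode s h (Finset.mem_Icc.1 hh).1 (Finset.mem_Icc.1 hh).2).2)]
    simp only [MSAux.qfun]
    rw [← Finset.mul_sum, hmeasure_sum s]
  -- almost-sure nonnegativity
  have hSae : ∀ r k, 1 ≤ k → k ≤ 2 ^ r → ∀ᵐ ω ∂P, S r k ω ∈ Set.Ioo (0:ℝ) 1 :=
    fun r k h1 h2 => MSAux.ae_mem_Ioo_of_betaLaw (hSmeas r k) (hS r k h1 h2)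
  have hRae : ∀ r k, 1 ≤ k → k ≤ 2 ^ r → ∀ᵐ ω ∂P, R r k ω ∈ Set.Ioo (0:ℝ) 1 :=
    fun r k h1 h2 => MSAux.ae_mem_Ioo_of_betaLaw (hRmeas r k) (hR r k h1 h2)
  have hgood : ∀ᵐ ω ∂P, ∀ r k : ℕ, 1 ≤ k → k ≤ 2 ^ r →
      (S r k ω ∈ Set.Ioo (0:ℝ) 1 ∧ R r k ω ∈ Set.Ioo (0:ℝ) 1) := by
    rw [ae_all_iff]
    intro r
    rw [ae_all_iff]
    intro k
    by_cases h1 : 1 ≤ k ∧ k ≤ 2 ^ r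
    · filter_upwards [hSae r k h1.1 h1.2, hRae r k h1.1 h1.2] with ω ha hb _ _
      exact ⟨ha, hb⟩
    · filter_upwards with ω h2 h3
      exact absurd ⟨h2, h3⟩ h1
  have hFnonneg : ∀ s, 0 ≤ᵐ[P] F s := by
    intro s
    filter_upwards [hgood] with ω hω
    apply Finset.sum_nonneg
    intro h hh
    obtain ⟨h1, h2⟩ := Finset.mem_Icc.1 hh
    apply mul_nonneg
    · apply mul_nonneg (hω s h h1 h2).1.1.le
      apply Finset.prod_nonneg
      intro r hr
      have hr' := (Finset.mem_range.1 hr).le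
      have hanc := hω r (anc s h r) (MSAux.anc_one_le s h r) (MSAux.anc_le s h r hr' h2)
      apply mul_nonneg
      · linarith [hanc.1.2]
      · split_ifs
        · exact hanc.2.1.le
        · linarith [hanc.2.2]
    · exact Set.indicator_nonneg (fun _ _ => zero_le_one) _
  have hc1 : (G0 A).toReal ≤ 1 := by
    calc (G0 A).toReal ≤ (1 : ℝ≥0∞).toReal :=
          ENNReal.toReal_mono ENNReal.one_ne_top prob_le_one
      _ = 1 := by simp
  have hnn2 : ∀ s : ℕ, 0 ≤ (1 - δ) / (1 + α + δ * s) * MSAux.qfun δ α s := fun s =>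
    mul_nonneg (div_nonneg (by linarith) (MSAux.hD' hδ0 hδ1 hα s).le)
      (MSAux.qfun_pos hδ0 hδ1 hα s).le
  have hlint : ∀ s, ∫⁻ ω, ‖F s ω‖₊ ∂P = ENNReal.ofReal (∫ ω, F s ω ∂P) := by
    intro s
    rw [ofReal_integral_eq_lintegral_ofReal (hFint s) (hFnonneg s)]
    apply lintegral_congr_ae
    filter_upwards [hFnonneg s] with ω hω
    exact Real.enorm_eq_ofReal hω
  have hsum := MSAux.hasSum_p hδ0 hδ1 hα
  have hbnd : (∑' s, ∫⁻ ω, ‖F s ω‖₊ ∂P) ≠ ∞ := by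
    have hle : ∀ s, ∫⁻ ω, ‖F s ω‖₊ ∂P
        ≤ ENNReal.ofReal ((1 - δ) / (1 + α + δ * s) * MSAux.qfun δ α s) := by
      intro s
      rw [hlint s, hFval s]
      apply ENNReal.ofReal_le_ofReal
      calc ((1 - δ) / (1 + α + δ * s) * MSAux.qfun δ α s) * (G0 A).toReal
          ≤ ((1 - δ) / (1 + α + δ * s) * MSAux.qfun δ α s) * 1 :=
            mul_le_mul_of_nonneg_left hc1 (hnn2 s)
        _ = (1 - δ) / (1 + α + δ * s) * MSAux.qfun δ α s := mul_one _
    have h2 : (∑' s : ℕ, ENNReal.ofReal ((1 - δ) / (1 + α + δ * s) * MSAux.qfun δ α s)) = 1 := by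
      rw [← ENNReal.ofReal_tsum_of_nonneg hnn2 hsum.summable, hsum.tsum_eq]
      simp
    exact ne_top_of_le_ne_top (by rw [h2]; exact ENNReal.one_ne_top)
      (ENNReal.tsum_le_tsum hle)
  have hmain : ∫ ω, (∑' s : ℕ, F s ω) ∂P = (G0 A).toReal := by
    rw [integral_tsum (fun s => (hFint s).1) hbnd]
    rw [tsum_congr hFval]
    rw [(hsum.mul_right ((G0 A).toReal)).tsum_eq, one_mul]
  exact hmain
end

section
/- Let δ ∈ [0,1), α > −δ and β > 0, and let {S_{s,h}} and {R_{s,h}} be mutually independent random variables with S_{s,h} ~ Beta(1−δ, α+δ(s+1)) and R_{s,h} ~ Beta(β,β). Then for every scale s ∈ ℕ and every node 1 ≤ h ≤ 2^s, the multiscale stick-breaking weight π_{s,h} satisfies E[π_{s,h}] = ((1−δ)/(α+1)) · (1/2)^s · ∏_{l=1}^{s} (α+δl)/(α+δl+1). -/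
open MeasureTheory ProbabilityTheory Filter

section Aux

open Set
open scoped ENNReal NNReal

section BetaAux

variable {a b : ℝ}

lemma complex_eq_real_on_Ioo {x : ℝ} (hx : x ∈ Ioo (0:ℝ) 1) :
    (x : ℂ) ^ ((a:ℂ) - 1) * (1 - (x : ℂ)) ^ ((b:ℂ) - 1)
      = ((x ^ (a - 1) * (1 - x) ^ (b - 1) : ℝ) : ℂ) := by
  have h1 : ((a:ℂ) - 1) = ((a - 1 : ℝ) : ℂ) := by push_cast; ring
  have h2 : ((b:ℂ) - 1) = ((b - 1 : ℝ) : ℂ) := by push_cast; ring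
  have h3 : (1 - (x:ℂ)) = ((1 - x : ℝ) : ℂ) := by push_cast; ring
  rw [h1, h2, h3, ← Complex.ofReal_cpow hx.1.le, ← Complex.ofReal_cpow (by linarith [hx.2]),
    ← Complex.ofReal_mul]

lemma betaFun_integrableOn (ha : 0 < a) (hb : 0 < b) :
    IntegrableOn (fun y : ℝ => y ^ (a - 1) * (1 - y) ^ (b - 1)) (Ioo (0:ℝ) 1) volume := by
  have hC : IntervalIntegrable (fun x : ℝ =>
      (x : ℂ) ^ ((a:ℂ) - 1) * (1 - (x : ℂ)) ^ ((b:ℂ) - 1)) volume 0 1 :=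
    Complex.betaIntegral_convergent (by simpa) (by simpa)
  have hI : IntegrableOn (fun x : ℝ =>
      (x : ℂ) ^ ((a:ℂ) - 1) * (1 - (x : ℂ)) ^ ((b:ℂ) - 1)) (Ioo (0:ℝ) 1) volume := by
    have := (intervalIntegrable_iff.1 hC)
    rw [uIoc_of_le zero_le_one] at this
    exact this.mono_set Ioo_subset_Ioc_self
  have : IntegrableOn (fun x : ℝ =>
      ((x : ℂ) ^ ((a:ℂ) - 1) * (1 - (x : ℂ)) ^ ((b:ℂ) - 1)).re) (Ioo (0:ℝ) 1) volume := hI.re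
  refine this.congr_fun (fun x hx => ?_) measurableSet_Ioo
  beta_reduce
  rw [complex_eq_real_on_Ioo hx, Complex.ofReal_re]

lemma betaFun_integral (ha : 0 < a) (hb : 0 < b) :
    ∫ y in Ioo (0:ℝ) 1, y ^ (a - 1) * (1 - y) ^ (b - 1)
      = Real.Gamma a * Real.Gamma b / Real.Gamma (a + b) := by
  have hC : IntervalIntegrable (fun x : ℝ =>
      (x : ℂ) ^ ((a:ℂ) - 1) * (1 - (x : ℂ)) ^ ((b:ℂ) - 1)) volume 0 1 :=
    Complex.betaIntegral_convergent (by simpa) (by simpa)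
  have hI : IntegrableOn (fun x : ℝ =>
      (x : ℂ) ^ ((a:ℂ) - 1) * (1 - (x : ℂ)) ^ ((b:ℂ) - 1)) (Ioo (0:ℝ) 1) volume := by
    have := (intervalIntegrable_iff.1 hC)
    rw [uIoc_of_le zero_le_one] at this
    exact this.mono_set Ioo_subset_Ioc_self
  have h1 : ∫ y in Ioo (0:ℝ) 1, y ^ (a - 1) * (1 - y) ^ (b - 1)
      = (∫ y in Ioo (0:ℝ) 1, (((y : ℂ) ^ ((a:ℂ) - 1) * (1 - (y : ℂ)) ^ ((b:ℂ) - 1))).re) := by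
    refine setIntegral_congr_fun measurableSet_Ioo (fun x hx => ?_)
    rw [complex_eq_real_on_Ioo hx, Complex.ofReal_re]
  have h2 : (∫ y in Ioo (0:ℝ) 1, (((y : ℂ) ^ ((a:ℂ) - 1) * (1 - (y : ℂ)) ^ ((b:ℂ) - 1))).re)
      = (∫ y in Ioo (0:ℝ) 1, ((y : ℂ) ^ ((a:ℂ) - 1) * (1 - (y : ℂ)) ^ ((b:ℂ) - 1))).re :=
    integral_re hI
  have h3 : (∫ y in Ioo (0:ℝ) 1, ((y : ℂ) ^ ((a:ℂ) - 1) * (1 - (y : ℂ)) ^ ((b:ℂ) - 1)))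
      = Complex.betaIntegral a b := by
    rw [← integral_Ioc_eq_integral_Ioo, Complex.betaIntegral,
      intervalIntegral.integral_of_le zero_le_one]
  have hG : Complex.betaIntegral a b
      = ((Real.Gamma a * Real.Gamma b / Real.Gamma (a + b) : ℝ) : ℂ) := by
    have hab : (0:ℝ) < a + b := by linarith
    have := Complex.Gamma_mul_Gamma_eq_betaIntegral (s := (a:ℂ)) (t := (b:ℂ))
      (by simpa) (by simpa)
    have hne : Complex.Gamma ((a:ℂ) + (b:ℂ)) ≠ 0 := by
      rw [show ((a:ℂ) + (b:ℂ)) = ((a + b : ℝ) : ℂ) by push_cast; ring, Complex.Gamma_ofReal]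
      exact_mod_cast (Real.Gamma_pos_of_pos hab).ne'
    have hbeta : Complex.betaIntegral a b
        = Complex.Gamma a * Complex.Gamma b / Complex.Gamma ((a:ℂ) + (b:ℂ)) := by
      field_simp
      linear_combination -this
    rw [hbeta, show ((a:ℂ) + (b:ℂ)) = ((a + b : ℝ) : ℂ) by push_cast; ring,
      Complex.Gamma_ofReal, Complex.Gamma_ofReal, Complex.Gamma_ofReal]
    push_cast
    ring
  rw [h1, h2, h3, hG, Complex.ofReal_re]

lemma betaFun_integral_pos (ha : 0 < a) (hb : 0 < b) :
    0 < ∫ y in Ioo (0:ℝ) 1, y ^ (a - 1) * (1 - y) ^ (b - 1) := by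
  rw [betaFun_integral ha hb]
  have := Real.Gamma_pos_of_pos ha
  have := Real.Gamma_pos_of_pos hb
  have := Real.Gamma_pos_of_pos (show (0:ℝ) < a + b by linarith)
  positivity

end BetaAux

section BetaMeasure

variable {a b : ℝ}

lemma betaFun_measurable : Measurable (fun y : ℝ => y ^ (a - 1) * (1 - y) ^ (b - 1)) := by
  fun_prop

lemma betaMeasure_integral_eq (ha : 0 < a) (hb : 0 < b) (g : ℝ → ℝ) :
    ∫ x, g x ∂_root_.betaMeasure a b
      = ∫ x in Ioo (0:ℝ) 1,
          (x ^ (a - 1) * (1 - x) ^ (b - 1) /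
            ∫ y in Ioo (0:ℝ) 1, y ^ (a - 1) * (1 - y) ^ (b - 1)) * g x := by
  set C := ∫ y in Ioo (0:ℝ) 1, y ^ (a - 1) * (1 - y) ^ (b - 1) with hCdef
  have hC : 0 < C := betaFun_integral_pos ha hb
  have hdm : Measurable (fun x : ℝ => (x ^ (a - 1) * (1 - x) ^ (b - 1) / C).toNNReal) :=
    (betaFun_measurable.div_const C).real_toNNReal
  have : _root_.betaMeasure a b = (volume.restrict (Set.Ioo (0:ℝ) 1)).withDensity
      (fun x => ((x ^ (a - 1) * (1 - x) ^ (b - 1) / C).toNNReal : ℝ≥0∞)) := rfl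
  rw [this, integral_withDensity_eq_integral_smul hdm g]
  refine setIntegral_congr_fun measurableSet_Ioo (fun x hx => ?_)
  have hd0 : 0 ≤ x ^ (a - 1) * (1 - x) ^ (b - 1) / C := by
    have := Real.rpow_nonneg hx.1.le (a - 1)
    have := Real.rpow_nonneg (by linarith [hx.2] : (0:ℝ) ≤ 1 - x) (b - 1)
    positivity
  simp [NNReal.smul_def, Real.coe_toNNReal _ hd0]

lemma betaMeasure_isProbability (ha : 0 < a) (hb : 0 < b) :
    IsProbabilityMeasure (_root_.betaMeasure a b) := by
  constructor
  set C := ∫ y in Ioo (0:ℝ) 1, y ^ (a - 1) * (1 - y) ^ (b - 1) with hCdef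
  have hC : 0 < C := betaFun_integral_pos ha hb
  have hInt : IntegrableOn (fun x : ℝ => x ^ (a - 1) * (1 - x) ^ (b - 1) / C)
      (Ioo (0:ℝ) 1) volume := (betaFun_integrableOn ha hb).div_const C
  have hnn : 0 ≤ᵐ[volume.restrict (Ioo (0:ℝ) 1)]
      fun x : ℝ => x ^ (a - 1) * (1 - x) ^ (b - 1) / C := by
    filter_upwards [ae_restrict_mem measurableSet_Ioo] with x hx
    have := Real.rpow_nonneg hx.1.le (a - 1)
    have := Real.rpow_nonneg (by linarith [hx.2] : (0:ℝ) ≤ 1 - x) (b - 1)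
    positivity
  rw [_root_.betaMeasure, withDensity_apply _ MeasurableSet.univ, Measure.restrict_univ,
    ← ofReal_integral_eq_lintegral_ofReal hInt hnn]
  rw [integral_div, ← hCdef, div_self hC.ne', ENNReal.ofReal_one]

lemma betaMeasure_compl_Ioo (ha : 0 < a) (hb : 0 < b) :
    _root_.betaMeasure a b (Ioo (0:ℝ) 1)ᶜ = 0 := by
  rw [_root_.betaMeasure, withDensity_apply _ measurableSet_Ioo.compl,
    Measure.restrict_restrict measurableSet_Ioo.compl, Set.compl_inter_self,
    Measure.restrict_empty, lintegral_zero_measure]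

end BetaMeasure

section BetaMean

variable {a b : ℝ}

lemma betaMeasure_mean (ha : 0 < a) (hb : 0 < b) :
    ∫ x, x ∂_root_.betaMeasure a b = a / (a + b) := by
  rw [betaMeasure_integral_eq ha hb (fun x => x)]
  have hstep : ∀ x ∈ Ioo (0:ℝ) 1,
      (x ^ (a - 1) * (1 - x) ^ (b - 1) /
        ∫ y in Ioo (0:ℝ) 1, y ^ (a - 1) * (1 - y) ^ (b - 1)) * x
      = (x ^ (a + 1 - 1) * (1 - x) ^ (b - 1)) /
        ∫ y in Ioo (0:ℝ) 1, y ^ (a - 1) * (1 - y) ^ (b - 1) := by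
    intro x hx
    have hx0 : (0:ℝ) < x := hx.1
    have : x ^ (a - 1) * x = x ^ (a + 1 - 1) := by
      rw [show a + 1 - 1 = (a - 1) + 1 by ring, Real.rpow_add hx0, Real.rpow_one]
    have h2 : x ^ (a - 1) * (1 - x) ^ (b - 1) * x = x ^ (a + 1 - 1) * (1 - x) ^ (b - 1) := by
      linear_combination (1 - x) ^ (b - 1) * this
    rw [div_mul_eq_mul_div, h2]
  rw [setIntegral_congr_fun measurableSet_Ioo hstep, integral_div,
    betaFun_integral (by linarith : (0:ℝ) < a + 1) hb, betaFun_integral ha hb]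
  have ha' := Real.Gamma_pos_of_pos ha
  have hb' := Real.Gamma_pos_of_pos hb
  have hab := Real.Gamma_pos_of_pos (show (0:ℝ) < a + b by linarith)
  rw [Real.Gamma_add_one ha.ne', show a + 1 + b = (a + b) + 1 by ring,
    Real.Gamma_add_one (by linarith : a + b ≠ 0)]
  field_simp

lemma betaMeasure_integrable_of_le_one (ha : 0 < a) (hb : 0 < b)
    {g : ℝ → ℝ} (hg : Measurable g) (hbd : ∀ x ∈ Ioo (0:ℝ) 1, |g x| ≤ 1) :
    Integrable g (_root_.betaMeasure a b) := by
  have : IsProbabilityMeasure (_root_.betaMeasure a b) := betaMeasure_isProbability ha hb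
  refine Integrable.mono' (integrable_const 1) hg.aestronglyMeasurable ?_
  have hae : ∀ᵐ x ∂_root_.betaMeasure a b, x ∈ Ioo (0:ℝ) 1 := by
    rw [ae_iff]
    have hs : {x : ℝ | ¬ x ∈ Ioo (0:ℝ) 1} = (Ioo (0:ℝ) 1)ᶜ := rfl
    rw [hs]; exact betaMeasure_compl_Ioo ha hb
  filter_upwards [hae] with x hx using by simpa using hbd x hx

lemma betaMeasure_mean_one_sub (ha : 0 < a) (hb : 0 < b) :
    ∫ x, (1 - x) ∂_root_.betaMeasure a b = b / (a + b) := by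
  have : IsProbabilityMeasure (_root_.betaMeasure a b) := betaMeasure_isProbability ha hb
  have h1 : Integrable (fun _ : ℝ => (1:ℝ)) (_root_.betaMeasure a b) := integrable_const 1
  have h2 : Integrable (fun x : ℝ => x) (_root_.betaMeasure a b) :=
    betaMeasure_integrable_of_le_one ha hb measurable_id
      (fun x hx => by rw [abs_of_pos hx.1]; exact hx.2.le)
  rw [integral_sub h1 h2, integral_const, betaMeasure_mean ha hb]
  simp only [measure_univ, ENNReal.toReal_one, smul_eq_mul, mul_one, probReal_univ]
  field_simp
  ring

end BetaMean

section RV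

variable {Ω : Type*} [MeasurableSpace Ω] {P : Measure Ω} [IsProbabilityMeasure P] {a b : ℝ}

lemma rv_integrable {X : Ω → ℝ} (hX : Measurable X) (ha : 0 < a) (hb : 0 < b)
    (hmap : Measure.map X P = _root_.betaMeasure a b) :
    (∀ᵐ ω ∂P, X ω ∈ Ioo (0:ℝ) 1) := by
  rw [ae_iff]
  have : {ω | ¬ X ω ∈ Ioo (0:ℝ) 1} = X ⁻¹' (Ioo (0:ℝ) 1)ᶜ := rfl
  rw [this, ← Measure.map_apply hX measurableSet_Ioo.compl, hmap,
    betaMeasure_compl_Ioo ha hb]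

lemma rv_int_X {X : Ω → ℝ} (hX : Measurable X) (ha : 0 < a) (hb : 0 < b)
    (hmap : Measure.map X P = _root_.betaMeasure a b) : Integrable X P := by
  refine Integrable.mono' (integrable_const 1) hX.aestronglyMeasurable ?_
  filter_upwards [rv_integrable hX ha hb hmap] with ω hω
  rw [Real.norm_eq_abs, abs_of_pos hω.1]; exact hω.2.le

lemma rv_int_one_sub_X {X : Ω → ℝ} (hX : Measurable X) (ha : 0 < a) (hb : 0 < b)
    (hmap : Measure.map X P = _root_.betaMeasure a b) : Integrable (fun ω => 1 - X ω) P := by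
  refine Integrable.mono' (integrable_const 1) (measurable_const.sub hX).aestronglyMeasurable ?_
  filter_upwards [rv_integrable hX ha hb hmap] with ω hω
  rw [Real.norm_eq_abs, abs_of_pos (by linarith [hω.2])]; linarith [hω.1]

lemma rv_mean_X {X : Ω → ℝ} (hX : Measurable X) (ha : 0 < a) (hb : 0 < b)
    (hmap : Measure.map X P = _root_.betaMeasure a b) :
    ∫ ω, X ω ∂P = a / (a + b) := by
  have := integral_map (f := fun x : ℝ => x) hX.aemeasurable
    (by rw [hmap]; exact measurable_id.aestronglyMeasurable)
  rw [← this, hmap, betaMeasure_mean ha hb]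

lemma rv_mean_one_sub_X {X : Ω → ℝ} (hX : Measurable X) (ha : 0 < a) (hb : 0 < b)
    (hmap : Measure.map X P = _root_.betaMeasure a b) :
    ∫ ω, (1 - X ω) ∂P = b / (a + b) := by
  have := integral_map (f := fun x : ℝ => 1 - x) hX.aemeasurable
    (by rw [hmap]; exact (measurable_const.sub measurable_id).aestronglyMeasurable)
  rw [← this, hmap, betaMeasure_mean_one_sub ha hb]

end RV

section ProdIndep

lemma integral_finset_prod_of_iIndepFun {Ω : Type*} [MeasurableSpace Ω] {P : Measure Ω}
    [IsProbabilityMeasure P] {ι : Type*} {Y : ι → Ω → ℝ}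
    (hmeas : ∀ i, Measurable (Y i))
    (hindep : iIndepFun Y P)
    (t : Finset ι) (hint : ∀ i ∈ t, Integrable (Y i) P) :
    Integrable (fun ω => ∏ i ∈ t, Y i ω) P ∧
      ∫ ω, ∏ i ∈ t, Y i ω ∂P = ∏ i ∈ t, ∫ ω, Y i ω ∂P := by
  classical
  induction t using Finset.induction_on with
  | empty => simp
  | @insert a t hi ih =>
    obtain ⟨ihint, iheq⟩ := ih (fun i hi' => hint i (Finset.mem_insert_of_mem hi'))
    have hint_a : Integrable (Y a) P := hint a (Finset.mem_insert_self _ _)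
    have h1 : IndepFun (∏ j ∈ t, Y j) (Y a) P :=
      hindep.indepFun_finsetProd_of_notMem hmeas hi
    have hpt : (∏ j ∈ t, Y j) = fun ω => ∏ j ∈ t, Y j ω := by
      funext ω; simp [Finset.prod_apply]
    have hmul : Integrable ((∏ j ∈ t, Y j) * Y a) P := by
      apply h1.integrable_mul _ hint_a
      rw [hpt]; exact ihint
    constructor
    · have : ((∏ j ∈ t, Y j) * Y a) = fun ω => ∏ i ∈ insert a t, Y i ω := by
        funext ω
        simp [Finset.prod_insert hi, Finset.prod_apply, mul_comm]
      rwa [this] at hmul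
    · have heq : ∫ ω, ∏ i ∈ insert a t, Y i ω ∂P = ∫ ω, ((∏ j ∈ t, Y j) * Y a) ω ∂P := by
        congr 1; funext ω
        simp [Finset.prod_insert hi, Finset.prod_apply, mul_comm]
      rw [heq]
      have := h1.integral_mul_eq_mul_integral (by rw [hpt]; exact ihint.aestronglyMeasurable)
        hint_a.aestronglyMeasurable
      rw [show (integral P ((∏ j ∈ t, Y j) * Y a)) = ∫ ω, ((∏ j ∈ t, Y j) * Y a) ω ∂P from rfl]
        at this
      rw [this, Finset.prod_insert hi, hpt, iheq, mul_comm]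

end ProdIndep

section Telescope

private lemma tele_aux (A P B Q N D0 D1 : ℝ) (h : A / D0 * P = B * Q) :
    A / D1 * (P * (N / D0)) = B * (Q * (N / D1)) := by
  have h1 : A / D1 * (P * (N / D0)) = (A / D0 * P) * (N / D1) := by ring
  rw [h1, h]; ring

lemma telescope_prod (δ α : ℝ) (s : ℕ) :
    (1 - δ) / ((1 - δ) + (α + δ * (s + 1))) *
        ∏ r ∈ Finset.range s, ((α + δ * (r + 1)) / ((1 - δ) + (α + δ * (r + 1))))
      = (1 - δ) / (α + 1) * ∏ l ∈ Finset.Icc 1 s, (α + δ * l) / (α + δ * l + 1) := by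
  induction s with
  | zero =>
    rw [Finset.range_zero, Finset.prod_empty, show Finset.Icc 1 0 = (∅ : Finset ℕ) from rfl,
      Finset.prod_empty, show (1 - δ) + (α + δ * ((0:ℕ) + 1)) = α + 1 by push_cast; ring]
  | succ n ih =>
    rw [Finset.prod_range_succ, Finset.prod_Icc_succ_top (Nat.le_add_left 1 n)]
    have hN : α + δ * ((n:ℝ) + 1) = α + δ * ((n+1 : ℕ) : ℝ) := by push_cast; ring
    have hD : (1 - δ) + (α + δ * (((n+1:ℕ):ℝ) + 1)) = α + δ * ((n+1:ℕ):ℝ) + 1 := by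
      push_cast; ring
    rw [hN, hD]
    rw [hN] at ih
    exact tele_aux (1 - δ) _ ((1 - δ) / (α + 1)) _ (α + δ * ((n+1:ℕ):ℝ))
      ((1 - δ) + (α + δ * ((n+1:ℕ):ℝ))) (α + δ * ((n+1:ℕ):ℝ) + 1) ih

end Telescope

section Anc

lemma anc_ge_one (s h r : ℕ) : 1 ≤ anc s h r := Nat.le_add_left 1 _

lemma anc_le (s h r : ℕ) (hh1 : 1 ≤ h) (hh2 : h ≤ 2 ^ s) (hr : r ≤ s) :
    anc s h r ≤ 2 ^ r := by
  have h2 : (h - 1) / 2 ^ (s - r) < 2 ^ r := by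
    apply Nat.div_lt_of_lt_mul
    calc h - 1 < 2 ^ s := by omega
    _ = 2 ^ (s - r) * 2 ^ r := by rw [← pow_add]; congr 1; omega
  unfold anc; omega

end Anc

/-- auxiliary post-composition maps -/
noncomputable def sbG (s h : ℕ) : (ℕ × ℕ) ⊕ (ℕ × ℕ) → ℝ → ℝ :=
  Sum.elim (fun p => if p.1 = s then (fun x => x) else (fun x => 1 - x))
    (fun p => if anc s h (p.1 + 1) = 2 * anc s h p.1 then (fun x => x) else (fun x => 1 - x))

lemma sbG_measurable (s h : ℕ) (i : (ℕ × ℕ) ⊕ (ℕ × ℕ)) : Measurable (sbG s h i) := by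
  rcases i with p | p <;> unfold sbG <;> dsimp <;> split <;>
    first
      | exact measurable_id
      | exact measurable_const.sub measurable_id


end Aux

/-- Expected value of the multiscale stick-breaking weight of node `(s,h)`:
`E[π (s,h)] = ((1-δ)/(α+1)) (1/2)^s ∏_{l=1}^s (α+δl)/(α+δl+1)`. -/
theorem multiscale_stick_breaking_weight_mean
    {Ω : Type*} [MeasurableSpace Ω] (P : Measure Ω) [IsProbabilityMeasure P]
    (δ α β : ℝ) (hδ0 : 0 ≤ δ) (hδ1 : δ < 1) (hα : -δ < α) (hβ : 0 < β)
    (S R : ℕ → ℕ → Ω → ℝ)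
    (hSmeas : ∀ s h, Measurable (S s h)) (hRmeas : ∀ s h, Measurable (R s h))
    (hindep : iIndepFun
      (fun i : (ℕ × ℕ) ⊕ (ℕ × ℕ) =>
        Sum.elim (fun p => S p.1 p.2) (fun p => R p.1 p.2) i) P)
    (hS : ∀ s h, 1 ≤ h → h ≤ 2 ^ s →
      Measure.map (S s h) P = _root_.betaMeasure (1 - δ) (α + δ * (s + 1)))
    (hR : ∀ s h, 1 ≤ h → h ≤ 2 ^ s → Measure.map (R s h) P = _root_.betaMeasure β β)
    (s h : ℕ) (hh1 : 1 ≤ h) (hh2 : h ≤ 2 ^ s) :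
    ∫ ω, msWeight (fun a b => S a b ω) (fun a b => R a b ω) s h ∂P
      = (1 - δ) / (α + 1) * (1 / 2) ^ s *
          ∏ l ∈ Finset.Icc 1 s, (α + δ * l) / (α + δ * l + 1) := by
  classical
  have ha : (0:ℝ) < 1 - δ := by linarith
  have hb : ∀ r : ℕ, (0:ℝ) < α + δ * (r + 1) := by
    intro r
    have : (0:ℝ) ≤ δ * r := by positivity
    push_cast; nlinarith
  -- the underlying family and the composed family
  set X : (ℕ × ℕ) ⊕ (ℕ × ℕ) → Ω → ℝ :=
    fun i => Sum.elim (fun p => S p.1 p.2) (fun p => R p.1 p.2) i with hX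
  have hXmeas : ∀ i, Measurable (X i) := by
    rintro (p | p)
    · exact hSmeas p.1 p.2
    · exact hRmeas p.1 p.2
  set Y : (ℕ × ℕ) ⊕ (ℕ × ℕ) → Ω → ℝ := fun i => sbG s h i ∘ X i with hY
  have hYmeas : ∀ i, Measurable (Y i) := fun i => (sbG_measurable s h i).comp (hXmeas i)
  have hYindep : iIndepFun Y P :=
    hindep.comp (sbG s h) (sbG_measurable s h)
  -- the index sets
  set t1 : Finset ((ℕ × ℕ) ⊕ (ℕ × ℕ)) :=
    (Finset.range s).image (fun r => Sum.inl (r, anc s h r)) with ht1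
  set t2 : Finset ((ℕ × ℕ) ⊕ (ℕ × ℕ)) :=
    (Finset.range s).image (fun r => Sum.inr (r, anc s h r)) with ht2
  set t : Finset ((ℕ × ℕ) ⊕ (ℕ × ℕ)) := insert (Sum.inl (s, h)) (t1 ∪ t2) with ht
  have hinj1 : ∀ x ∈ Finset.range s, ∀ y ∈ Finset.range s,
      (Sum.inl (x, anc s h x) : (ℕ × ℕ) ⊕ (ℕ × ℕ)) = Sum.inl (y, anc s h y) → x = y := by
    intro x _ y _ hxy
    simpa using (Prod.mk.injEq .. ▸ (Sum.inl.injEq _ _ ▸ hxy)).1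
  have hinj2 : ∀ x ∈ Finset.range s, ∀ y ∈ Finset.range s,
      (Sum.inr (x, anc s h x) : (ℕ × ℕ) ⊕ (ℕ × ℕ)) = Sum.inr (y, anc s h y) → x = y := by
    intro x _ y _ hxy
    simpa using (Prod.mk.injEq .. ▸ (Sum.inr.injEq _ _ ▸ hxy)).1
  have hnotmem : (Sum.inl (s, h) : (ℕ × ℕ) ⊕ (ℕ × ℕ)) ∉ t1 ∪ t2 := by
    simp only [ht1, ht2, Finset.mem_union, Finset.mem_image, Finset.mem_range]
    rintro (⟨r, hr, hre⟩ | ⟨r, hr, hre⟩)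
    · injection hre with h'
      injection h' with h1 h2
      omega
    · simp at hre
  have hdisj : Disjoint t1 t2 := by
    rw [Finset.disjoint_left]
    intro i h1 h2
    rw [Finset.mem_image] at h1 h2
    obtain ⟨r, _, rfl⟩ := h1
    obtain ⟨r', _, he⟩ := h2
    exact Sum.inl_ne_inr he.symm
  -- values of Y on the relevant indices
  have hYtop : Y (Sum.inl (s, h)) = S s h := by
    funext ω; simp [hY, sbG, hX]
  have hY1 : ∀ r, r < s → Y (Sum.inl (r, anc s h r)) = fun ω => 1 - S r (anc s h r) ω := by
    intro r hr; funext ω; simp [hY, sbG, hX, Nat.ne_of_lt hr]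
  have hY2 : ∀ r, Y (Sum.inr (r, anc s h r)) = fun ω =>
      (if anc s h (r + 1) = 2 * anc s h r then R r (anc s h r) ω
        else 1 - R r (anc s h r) ω) := by
    intro r; funext ω
    by_cases hc : anc s h (r + 1) = 2 * anc s h r <;> simp [hY, sbG, hX, hc]
  -- pointwise identification of the integrand
  have hpt : ∀ ω, msWeight (fun a b => S a b ω) (fun a b => R a b ω) s h
      = ∏ i ∈ t, Y i ω := by
    intro ω
    rw [ht, Finset.prod_insert hnotmem, Finset.prod_union hdisj, ht1, ht2,
      Finset.prod_image hinj1, Finset.prod_image hinj2, hYtop]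
    rw [msWeight, ← Finset.prod_mul_distrib]
    congr 1
    refine Finset.prod_congr rfl (fun r hr => ?_)
    rw [hY1 r (Finset.mem_range.mp hr), hY2 r]
  -- integrability of each factor
  have hanc : ∀ r, r < s → 1 ≤ anc s h r ∧ anc s h r ≤ 2 ^ r := fun r hr =>
    ⟨anc_ge_one s h r, anc_le s h r hh1 hh2 hr.le⟩
  have hintt : ∀ i ∈ t, Integrable (Y i) P := by
    intro i hi
    rw [ht, Finset.mem_insert] at hi
    rcases hi with rfl | hi
    · rw [hYtop]
      exact rv_int_X (hSmeas s h) ha (hb s) (hS s h hh1 hh2)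
    rw [Finset.mem_union] at hi
    rcases hi with hi | hi <;> rw [Finset.mem_image] at hi <;> obtain ⟨r, hr, rfl⟩ := hi
    · rw [hY1 r (Finset.mem_range.mp hr)]
      exact rv_int_one_sub_X (hSmeas r _) ha (hb r)
        (hS r _ (hanc r (Finset.mem_range.mp hr)).1 (hanc r (Finset.mem_range.mp hr)).2)
    · rw [hY2 r]
      by_cases hc : anc s h (r + 1) = 2 * anc s h r
      · simp only [hc, if_true]
        exact rv_int_X (hRmeas r _) hβ hβ
          (hR r _ (hanc r (Finset.mem_range.mp hr)).1 (hanc r (Finset.mem_range.mp hr)).2)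
      · simp only [hc, if_false]
        exact rv_int_one_sub_X (hRmeas r _) hβ hβ
          (hR r _ (hanc r (Finset.mem_range.mp hr)).1 (hanc r (Finset.mem_range.mp hr)).2)
  -- apply the product formula
  have hmain := (integral_finset_prod_of_iIndepFun hYmeas hYindep t hintt).2
  have hLHS : ∫ ω, msWeight (fun a b => S a b ω) (fun a b => R a b ω) s h ∂P
      = ∫ ω, ∏ i ∈ t, Y i ω ∂P := by
    congr 1; funext ω; exact hpt ω
  rw [hLHS, hmain, ht, Finset.prod_insert hnotmem, Finset.prod_union hdisj, ht1, ht2,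
    Finset.prod_image hinj1, Finset.prod_image hinj2]
  -- compute each expectation
  have e0 : ∫ ω, Y (Sum.inl (s, h)) ω ∂P
      = (1 - δ) / ((1 - δ) + (α + δ * (s + 1))) := by
    rw [hYtop]
    exact rv_mean_X (hSmeas s h) ha (hb s) (hS s h hh1 hh2)
  have e1 : ∀ r ∈ Finset.range s, ∫ ω, Y (Sum.inl (r, anc s h r)) ω ∂P
      = (α + δ * (r + 1)) / ((1 - δ) + (α + δ * (r + 1))) := by
    intro r hr
    rw [hY1 r (Finset.mem_range.mp hr)]
    exact rv_mean_one_sub_X (hSmeas r _) ha (hb r)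
      (hS r _ (hanc r (Finset.mem_range.mp hr)).1 (hanc r (Finset.mem_range.mp hr)).2)
  have hhalf : β / (β + β) = (1:ℝ) / 2 := by
    rw [show β + β = 2 * β by ring]
    rw [div_eq_div_iff (by linarith) (by norm_num)]
    ring
  have e2 : ∀ r ∈ Finset.range s, ∫ ω, Y (Sum.inr (r, anc s h r)) ω ∂P = (1:ℝ) / 2 := by
    intro r hr
    rw [hY2 r]
    have h1 := (hanc r (Finset.mem_range.mp hr)).1
    have h2 := (hanc r (Finset.mem_range.mp hr)).2
    by_cases hc : anc s h (r + 1) = 2 * anc s h r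
    · simp only [hc, if_true]
      rw [rv_mean_X (hRmeas r _) hβ hβ (hR r _ h1 h2), hhalf]
    · simp only [hc, if_false]
      rw [rv_mean_one_sub_X (hRmeas r _) hβ hβ (hR r _ h1 h2), hhalf]
  rw [e0, Finset.prod_congr rfl e1, Finset.prod_congr rfl e2, Finset.prod_const,
    Finset.card_range]
  have tele := telescope_prod δ α s
  calc (1 - δ) / ((1 - δ) + (α + δ * (s + 1))) *
        ((∏ r ∈ Finset.range s, (α + δ * (r + 1)) / ((1 - δ) + (α + δ * (r + 1)))) *
          ((1:ℝ) / 2) ^ s)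
      = ((1 - δ) / ((1 - δ) + (α + δ * (s + 1))) *
          ∏ r ∈ Finset.range s, (α + δ * (r + 1)) / ((1 - δ) + (α + δ * (r + 1)))) *
          ((1:ℝ) / 2) ^ s := by ring
    _ = ((1 - δ) / (α + 1) * ∏ l ∈ Finset.Icc 1 s, (α + δ * l) / (α + δ * l + 1)) *
          ((1:ℝ) / 2) ^ s := by rw [tele]
    _ = (1 - δ) / (α + 1) * (1 / 2) ^ s *
          ∏ l ∈ Finset.Icc 1 s, (α + δ * l) / (α + δ * l + 1) := by ring
end

section
/- Let δ ∈ [0,1) and α > −δ, and define p_s = ((1−δ)/(α+1)) · ∏_{l=1}^{s} (α+δl)/(α+δl+1) for s ∈ ℕ. Then ∑_{s=0}^∞ p_s = 1. -/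
/-!
The weight left for scales `≥ s`, `g s = ∏_{l<s} (α + δ(l+1)) / (α + δl + 1)`, satisfies
`g 0 = 1` and `g s - g (s+1) = p s`, so the series telescopes to `1 - lim g`. Each factor of `g`
is `1 - (1-δ)/(α + δl + 1)`, and these defects form a divergent, harmonic-like series, hence
`g s ≤ exp (-∑_{l<s} (1-δ)/(α + δl + 1)) → 0`.
-/

open Finset Filter Topology

theorem hasSum_sub_succ_of_antitone {g : ℕ → ℝ} (hg : Antitone g)
    (hlim : Tendsto g atTop (𝓝 0)) : HasSum (fun n ↦ g n - g (n + 1)) (g 0) := by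
  refine (hasSum_iff_tendsto_nat_of_nonneg (fun n ↦ sub_nonneg.2 (hg n.le_succ)) _).2 ?_
  simp only [sum_range_sub']
  simpa using hlim.const_sub (g 0)

theorem tendsto_prod_range_one_sub_zero {c : ℕ → ℝ} (hc : ∀ n, c n ≤ 1)
    (hsum : Tendsto (fun n ↦ ∑ i ∈ range n, c i) atTop atTop) :
    Tendsto (fun n ↦ ∏ i ∈ range n, (1 - c i)) atTop (𝓝 0) := by
  have hexp : Tendsto (fun n ↦ Real.exp (-∑ i ∈ range n, c i)) atTop (𝓝 0) :=
    Real.tendsto_exp_atBot.comp (tendsto_neg_atTop_atBot.comp hsum)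
  refine squeeze_zero (fun n ↦ prod_nonneg fun i _ ↦ sub_nonneg.2 (hc i)) (fun n ↦ ?_) hexp
  rw [← sum_neg_distrib, Real.exp_sum]
  exact prod_le_prod (fun i _ ↦ sub_nonneg.2 (hc i)) fun i _ ↦ Real.one_sub_le_exp_neg (c i)

theorem tendsto_sum_range_one_div_affine_atTop {a b : ℝ} (ha : 0 ≤ a) (hb : 0 < b) :
    Tendsto (fun n ↦ ∑ i ∈ range n, 1 / (a * i + b)) atTop atTop := by
  have hharmonic := Real.tendsto_sum_range_one_div_nat_succ_atTop.const_mul_atTop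
    (inv_pos.2 (add_pos_of_nonneg_of_pos ha hb))
  refine tendsto_atTop_mono (fun n ↦ ?_) hharmonic
  rw [mul_sum]
  refine sum_le_sum fun i _ ↦ ?_
  have hi : (0 : ℝ) ≤ i := i.cast_nonneg
  rw [inv_mul_eq_div, div_div]
  -- `a i + b ≤ (a + b)(i + 1)`
  exact one_div_le_one_div_of_le (by positivity) (by nlinarith)

noncomputable def scaleWeight (δ α : ℝ) (s : ℕ) : ℝ :=
  (1 - δ) / (α + 1) * ∏ l ∈ Icc 1 s, (α + δ * l) / (α + δ * l + 1)

noncomputable def tailWeight (δ α : ℝ) (s : ℕ) : ℝ :=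
  ∏ l ∈ range s, (α + δ * (l + 1)) / (α + δ * l + 1)

section

variable {δ α : ℝ}

theorem tailWeight_zero : tailWeight δ α 0 = 1 := prod_range_zero _

theorem tailWeight_succ (s : ℕ) :
    tailWeight δ α (s + 1) = tailWeight δ α s * ((α + δ * (s + 1)) / (α + δ * s + 1)) :=
  prod_range_succ _ s

theorem tailWeight_eq (hδ : 0 ≤ δ) (hα : -1 < α) (s : ℕ) :
    tailWeight δ α s =
      (α + δ * s + 1) / (α + 1) * ∏ l ∈ Icc 1 s, (α + δ * l) / (α + δ * l + 1) := by
  induction s with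
  | zero => simp [tailWeight, div_self (by linarith : α + 1 ≠ 0)]
  | succ s ih =>
    have hs : 0 < α + δ * s + 1 := by nlinarith [s.cast_nonneg (α := ℝ)]
    have hs' : 0 < α + δ * (s + 1) + 1 := by nlinarith [s.cast_nonneg (α := ℝ)]
    rw [tailWeight_succ, ih, prod_Icc_succ_top (by omega)]
    generalize ∏ l ∈ Icc 1 s, (α + δ * l) / (α + δ * l + 1) = P
    push_cast
    field_simp

theorem tailWeight_sub_tailWeight_succ (hδ : 0 ≤ δ) (hα : -1 < α) (s : ℕ) :
    tailWeight δ α s - tailWeight δ α (s + 1) = scaleWeight δ α s := by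
  have hs : 0 < α + δ * s + 1 := by nlinarith [s.cast_nonneg (α := ℝ)]
  rw [tailWeight_succ, tailWeight_eq hδ hα, scaleWeight]
  field_simp
  ring

theorem scaleWeight_nonneg (hδ0 : 0 ≤ δ) (hδ1 : δ ≤ 1) (hα : -δ ≤ α) (s : ℕ) :
    0 ≤ scaleWeight δ α s := by
  refine mul_nonneg (div_nonneg (by linarith) (by linarith)) (prod_nonneg fun l hl ↦ ?_)
  have hl : (1 : ℝ) ≤ l := by exact_mod_cast (mem_Icc.1 hl).1
  exact div_nonneg (by nlinarith) (by nlinarith)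

theorem tendsto_tailWeight_zero (hδ0 : 0 ≤ δ) (hδ1 : δ < 1) (hα : -δ < α) :
    Tendsto (tailWeight δ α) atTop (𝓝 0) := by
  have hfactor (l : ℕ) : (α + δ * (l + 1)) / (α + δ * l + 1) =
      1 - (1 - δ) * (1 / (δ * l + (α + 1))) := by
    have : 0 < δ * l + (α + 1) := by nlinarith [l.cast_nonneg (α := ℝ)]
    rw [show α + δ * l + 1 = δ * l + (α + 1) by ring]
    field_simp
    ring
  rw [show tailWeight δ α = _ from funext fun s ↦ prod_congr rfl fun l _ ↦ hfactor l]
  refine tendsto_prod_range_one_sub_zero (fun l ↦ ?_) ?_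
  · have hl : (0 : ℝ) ≤ l := l.cast_nonneg
    rw [mul_one_div, div_le_one (by nlinarith)]
    nlinarith
  · simp only [← mul_sum]
    exact (tendsto_sum_range_one_div_affine_atTop hδ0 (by linarith)).const_mul_atTop
      (by linarith)

end

/-- For `δ ∈ [0,1)` and `α > -δ`, the expected total weights per scale
`p s = ((1-δ)/(α+1)) ∏_{l=1}^s (α+δl)/(α+δl+1)` sum to one. -/
theorem expected_scale_weights_sum_to_one
    (δ α : ℝ) (hδ0 : 0 ≤ δ) (hδ1 : δ < 1) (hα : -δ < α) :
    ∑' s : ℕ,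
        (1 - δ) / (α + 1) * ∏ l ∈ Finset.Icc 1 s, (α + δ * l) / (α + δ * l + 1) = 1 := by
  have hα1 : -1 < α := by linarith
  have hanti : Antitone (tailWeight δ α) := antitone_nat_of_succ_le fun s ↦ by
    linarith [tailWeight_sub_tailWeight_succ hδ0 hα1 s,
      scaleWeight_nonneg hδ0 hδ1.le hα.le s]
  have hsum := hasSum_sub_succ_of_antitone hanti (tendsto_tailWeight_zero hδ0 hδ1 hα)
  simp only [tailWeight_sub_tailWeight_succ hδ0 hα1, tailWeight_zero] at hsum
  exact hsum.tsum_eq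
end

section
/- Let δ ∈ [0,1) and α > −δ, and define p_s = ((1−δ)/(α+1)) · ∏_{l=1}^{s} (α+δl)/(α+δl+1) for s ∈ ℕ. Then for every N ∈ ℕ, 1 − ∑_{s=0}^{N} p_s = ∏_{l=0}^{N} (α+δl+δ)/(α+δl+1). -/
/-!
Write `d l = α + δ l + 1` (positive under the hypotheses) and `c = 1 - δ`. Since `α + δ l = d (l - 1) - c`,
the product defining `p s` telescopes to `p s = c / d s * ∏_{l < s} (1 - c / d l)`, and the factors on
the right are `1 - c / d l`. The claim is then the stick-breaking identity
`∏_{i < n} (1 - x i) = 1 - ∑_{i < n} x i ∏_{j < i} (1 - x j)` with `x l = c / d l`.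
-/

open Finset

theorem Finset.prod_range_one_sub {R : Type*} [CommRing R] (x : ℕ → R) (n : ℕ) :
    ∏ i ∈ range n, (1 - x i) = 1 - ∑ i ∈ range n, x i * ∏ j ∈ range i, (1 - x j) := by
  induction n with
  | zero => simp
  | succ n ih => rw [prod_range_succ, sum_range_succ, ih]; ring

theorem mul_prod_Icc_sub_one_div {K : Type*} [Field K] (d : ℕ → K) (c : K)
    (hd : ∀ l, d l ≠ 0) (hstep : ∀ l, d (l + 1) - 1 = d l - c) (s : ℕ) :
    c / d 0 * ∏ l ∈ Icc 1 s, (d l - 1) / d l = c / d s * ∏ l ∈ range s, (1 - c / d l) := by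
  induction s with
  | zero => simp
  | succ s ih =>
    rw [prod_Icc_succ_top (by omega), ← mul_assoc, ih, prod_range_succ, hstep]
    have := hd s
    have := hd (s + 1)
    field_simp

/-- For `δ ∈ [0,1)` and `α > -δ`, with
`p s = ((1-δ)/(α+1)) ∏_{l=1}^s (α+δl)/(α+δl+1)`, one has for every `N`
`1 - ∑_{s=0}^N p s = ∏_{l=0}^N (α+δl+δ)/(α+δl+1)`. -/
theorem expected_remaining_mass_below_scale
    (δ α : ℝ) (hδ0 : 0 ≤ δ) (hδ1 : δ < 1) (hα : -δ < α) (N : ℕ) :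
    1 - ∑ s ∈ Finset.range (N + 1),
          (1 - δ) / (α + 1) * ∏ l ∈ Finset.Icc 1 s, (α + δ * l) / (α + δ * l + 1)
      = ∏ l ∈ Finset.range (N + 1), (α + δ * l + δ) / (α + δ * l + 1) := by
  have hd (l : ℕ) : α + δ * l + 1 ≠ 0 := by
    have : 0 ≤ δ * l := by positivity
    linarith
  have weight (s : ℕ) : (1 - δ) / (α + 1) * ∏ l ∈ Icc 1 s, (α + δ * l) / (α + δ * l + 1) =
      (1 - δ) / (α + δ * s + 1) * ∏ l ∈ range s, (1 - (1 - δ) / (α + δ * l + 1)) := by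
    simpa using mul_prod_Icc_sub_one_div (fun l : ℕ ↦ α + δ * l + 1) (1 - δ) hd
      (fun l ↦ by push_cast; ring) s
  have factor (l : ℕ) : (α + δ * l + δ) / (α + δ * l + 1) = 1 - (1 - δ) / (α + δ * l + 1) := by
    field_simp [hd l]
    ring
  rw [sum_congr rfl fun s _ ↦ weight s, prod_congr rfl fun l _ ↦ factor l,
    prod_range_one_sub]
end

section
/- Let δ ∈ [0,1), α > −δ, β > 0. Let {S_s}_{s∈ℕ} and {T_s}_{s∈ℕ} be mutually independent random variables with S_s ~ Beta(1−δ, α+δ(s+1)) and T_s ~ Beta(β,β). Then the partial sums ∑_{s=0}^{N} E[log((1−S_s)·T_s)] tend to −∞ as N → ∞. In particular, each term satisfies E[log((1−S_s)·T_s)] ≤ log( (α+δs+δ) / (2(α+δs+1)) ) < log(1) = 0. -/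
open MeasureTheory ProbabilityTheory Filter

open Set

namespace BetaAux

noncomputable def f (a b x : ℝ) : ℝ := x ^ (a - 1) * (1 - x) ^ (b - 1)

noncomputable def B (a b : ℝ) : ℝ := ∫ x in Ioo (0:ℝ) 1, f a b x

lemma measurable_f (a b : ℝ) : Measurable (f a b) := by
  unfold f; fun_prop

lemma f_nonneg {a b x : ℝ} (hx : x ∈ Ioo (0:ℝ) 1) : 0 ≤ f a b x :=
  mul_nonneg (Real.rpow_nonneg hx.1.le _) (Real.rpow_nonneg (by linarith [hx.2]) _)

lemma f_pos {a b x : ℝ} (hx : x ∈ Ioo (0:ℝ) 1) : 0 < f a b x :=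
  mul_pos (Real.rpow_pos_of_pos hx.1 _) (Real.rpow_pos_of_pos (by linarith [hx.2]) _)

lemma integrableOn_f {a b : ℝ} (ha : 0 < a) (hb : 0 < b) :
    IntegrableOn (f a b) (Ioo 0 1) := by
  have h := (Complex.betaIntegral_convergent (u := a) (v := b) (by simpa) (by simpa)).norm
  rw [intervalIntegrable_iff_integrableOn_Ioc_of_le zero_le_one] at h
  refine (h.mono_set Ioo_subset_Ioc_self).congr_fun ?_ measurableSet_Ioo
  intro x hx
  have hx1 : (0:ℝ) < 1 - x := by linarith [hx.2]
  show ‖(x:ℂ) ^ ((a:ℂ) - 1) * (1 - (x:ℂ)) ^ ((b:ℂ) - 1)‖ = f a b x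
  have h1 : ((a:ℂ) - 1) = ((a - 1 : ℝ) : ℂ) := by push_cast; ring
  have h2 : ((b:ℂ) - 1) = ((b - 1 : ℝ) : ℂ) := by push_cast; ring
  have h3 : (1 - (x:ℂ)) = ((1 - x : ℝ) : ℂ) := by push_cast; ring
  rw [h1, h2, h3, ← Complex.ofReal_cpow hx.1.le (a - 1), ← Complex.ofReal_cpow hx1.le (b - 1)]
  rw [norm_mul, Complex.norm_real, Complex.norm_real, Real.norm_eq_abs, Real.norm_eq_abs,
    abs_of_nonneg (Real.rpow_nonneg hx.1.le _), abs_of_nonneg (Real.rpow_nonneg hx1.le _)]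
  rfl

lemma complex_beta_eq {a b : ℝ} (ha : 0 < a) (hb : 0 < b) :
    Complex.betaIntegral a b = (B a b : ℂ) := by
  rw [Complex.betaIntegral, intervalIntegral.integral_of_le zero_le_one,
    integral_Ioc_eq_integral_Ioo, B]
  rw [show ((∫ x in Ioo (0:ℝ) 1, f a b x : ℝ) : ℂ) = ∫ x in Ioo (0:ℝ) 1, ((f a b x : ℝ) : ℂ) from
    (integral_ofReal (𝕜 := ℂ)).symm]
  refine setIntegral_congr_fun measurableSet_Ioo fun x hx => ?_
  have hx1 : (0:ℝ) < 1 - x := by linarith [hx.2]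
  show (x:ℂ) ^ ((a:ℂ) - 1) * (1 - (x:ℂ)) ^ ((b:ℂ) - 1) = ((f a b x : ℝ) : ℂ)
  have h1 : ((a:ℂ) - 1) = ((a - 1 : ℝ) : ℂ) := by push_cast; ring
  have h2 : ((b:ℂ) - 1) = ((b - 1 : ℝ) : ℂ) := by push_cast; ring
  have h3 : (1 - (x:ℂ)) = ((1 - x : ℝ) : ℂ) := by push_cast; ring
  rw [h1, h2, h3, ← Complex.ofReal_cpow hx.1.le (a - 1), ← Complex.ofReal_cpow hx1.le (b - 1),
    ← Complex.ofReal_mul]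
  rfl

lemma B_succ {a b : ℝ} (ha : 0 < a) (hb : 0 < b) : B (a + 1) b = a / (a + b) * B a b := by
  have hab : (0:ℝ) < a + b := by linarith
  have key : Complex.betaIntegral ((a:ℂ)+1) b = ((a:ℝ) / (a+b) : ℝ) * Complex.betaIntegral a b := by
    have hΓa : Complex.Gamma a ≠ 0 := Complex.Gamma_ne_zero_of_re_pos (by simpa)
    have hΓab : Complex.Gamma ((a:ℂ) + b) ≠ 0 := Complex.Gamma_ne_zero_of_re_pos (by simp [hab])
    have e1 : Complex.Gamma ((a:ℂ)+1) * Complex.Gamma b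
        = Complex.Gamma ((a:ℂ)+1+b) * Complex.betaIntegral ((a:ℂ)+1) b :=
      Complex.Gamma_mul_Gamma_eq_betaIntegral (by simp; linarith) (by simpa)
    have e2 : Complex.Gamma (a:ℂ) * Complex.Gamma b
        = Complex.Gamma ((a:ℂ)+b) * Complex.betaIntegral a b :=
      Complex.Gamma_mul_Gamma_eq_betaIntegral (by simpa) (by simpa)
    have ga : Complex.Gamma ((a:ℂ)+1) = a * Complex.Gamma a :=
      Complex.Gamma_add_one _ (by simpa using ha.ne')
    have habC : ((a:ℂ)+b) ≠ 0 := by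
      intro h
      have : ((a:ℂ)+b).re = 0 := by rw [h]; simp
      simp at this; linarith
    have gab : Complex.Gamma ((a:ℂ)+1+b) = ((a:ℂ)+b) * Complex.Gamma ((a:ℂ)+b) := by
      have := Complex.Gamma_add_one ((a:ℂ)+b) habC
      rw [show (a:ℂ)+1+b = (a:ℂ)+b+1 by ring, this]
    rw [ga, gab] at e1
    have step : ((a:ℂ)+b) * Complex.Gamma ((a:ℂ)+b) * Complex.betaIntegral ((a:ℂ)+1) b
        = (a:ℂ) * (Complex.Gamma ((a:ℂ)+b) * Complex.betaIntegral a b) := by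
      rw [← e2]; linear_combination -e1
    have step2 : ((a:ℂ)+b) * Complex.betaIntegral ((a:ℂ)+1) b
        = (a:ℂ) * Complex.betaIntegral a b := by
      apply mul_left_cancel₀ hΓab; linear_combination step
    push_cast
    field_simp
    linear_combination step2
  have key2 : Complex.betaIntegral ((a+1:ℝ):ℂ) b = (((a/(a+b)) * B a b :ℝ):ℂ) := by
    push_cast
    rw [key, complex_beta_eq ha hb]
    push_cast
    ring
  rw [complex_beta_eq (by linarith : (0:ℝ) < a + 1) hb] at key2
  exact_mod_cast key2

lemma B_pos {a b : ℝ} (ha : 0 < a) (hb : 0 < b) : 0 < B a b := by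
  rw [B, setIntegral_pos_iff_support_of_nonneg_ae]
  · rw [show Function.support (f a b) ∩ Ioo (0:ℝ) 1 = Ioo 0 1 from
      inter_eq_right.2 fun x hx => (f_pos hx).ne']
    simp
  · filter_upwards [ae_restrict_mem measurableSet_Ioo] with x hx using f_nonneg hx
  · exact integrableOn_f ha hb

lemma betaMeasure_eq (a b : ℝ) :
    _root_.betaMeasure a b = (volume.restrict (Ioo (0:ℝ) 1)).withDensity
      fun x => ((Real.toNNReal (f a b x / B a b) : NNReal) : ENNReal) := rfl

lemma integral_betaMeasure {a b : ℝ} (ha : 0 < a) (hb : 0 < b) (g : ℝ → ℝ) :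
    ∫ x, g x ∂(_root_.betaMeasure a b) = ∫ x in Ioo (0:ℝ) 1, (f a b x / B a b) * g x := by
  rw [betaMeasure_eq, integral_withDensity_eq_integral_smul
    (((measurable_f a b).div_const _).real_toNNReal) g]
  refine setIntegral_congr_fun measurableSet_Ioo fun x hx => ?_
  have hd : 0 ≤ f a b x / B a b := div_nonneg (f_nonneg hx) (B_pos ha hb).le
  rw [NNReal.smul_def, Real.coe_toNNReal _ hd, smul_eq_mul]

lemma integrable_betaMeasure_iff {a b : ℝ} (ha : 0 < a) (hb : 0 < b) (g : ℝ → ℝ) :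
    Integrable g (_root_.betaMeasure a b) ↔
      IntegrableOn (fun x => (f a b x / B a b) * g x) (Ioo 0 1) := by
  rw [betaMeasure_eq, integrable_withDensity_iff_integrable_smul
    (((measurable_f a b).div_const _).real_toNNReal)]
  refine integrable_congr ?_
  filter_upwards [ae_restrict_mem measurableSet_Ioo] with x hx
  have hd : 0 ≤ f a b x / B a b := div_nonneg (f_nonneg hx) (B_pos ha hb).le
  rw [NNReal.smul_def, Real.coe_toNNReal _ hd, smul_eq_mul]

lemma integral_id_betaMeasure {a b : ℝ} (ha : 0 < a) (hb : 0 < b) :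
    ∫ x, x ∂(_root_.betaMeasure a b) = a / (a + b) := by
  rw [integral_betaMeasure ha hb]
  have : ∫ x in Ioo (0:ℝ) 1, (f a b x / B a b) * x
      = ∫ x in Ioo (0:ℝ) 1, f (a+1) b x / B a b := by
    refine setIntegral_congr_fun measurableSet_Ioo fun x hx => ?_
    have : f (a+1) b x = f a b x * x := by
      unfold f
      rw [show a + 1 - 1 = (a - 1) + 1 by ring, Real.rpow_add hx.1, Real.rpow_one]
      ring
    rw [this]; ring
  rw [this, integral_div]
  have hB := B_pos ha hb
  rw [show (∫ x in Ioo (0:ℝ) 1, f (a+1) b x) = B (a+1) b from rfl, B_succ ha hb]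
  field_simp

lemma abs_log_le {a x : ℝ} (ha : 0 < a) (hx : x ∈ Ioo (0:ℝ) 1) :
    |Real.log x| ≤ (2 / a) * x ^ (-(a/2)) := by
  have hX : (0:ℝ) < x ^ (-(a/2)) := Real.rpow_pos_of_pos hx.1 _
  have h1 : Real.log (x ^ (-(a/2))) ≤ x ^ (-(a/2)) - 1 := Real.log_le_sub_one_of_pos hX
  rw [Real.log_rpow hx.1] at h1
  have hlx : Real.log x ≤ 0 := Real.log_nonpos hx.1.le hx.2.le
  rw [abs_of_nonpos hlx]
  have h2a : (0:ℝ) < 2 / a := by positivity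
  have h2 : -Real.log x ≤ (2/a) * (x ^ (-(a/2)) - 1) := by
    have h3 := mul_le_mul_of_nonneg_left h1 h2a.le
    have h4 : (2/a) * (-(a/2) * Real.log x) = -Real.log x := by field_simp
    linarith [h3, h4.ge, h4.le]
  nlinarith [h2, h2a]

lemma integrable_log_betaMeasure {a b : ℝ} (ha : 0 < a) (hb : 0 < b) :
    Integrable Real.log (_root_.betaMeasure a b) := by
  rw [integrable_betaMeasure_iff ha hb]
  have hB := B_pos ha hb
  refine Integrable.mono' (((integrableOn_f (by linarith : (0:ℝ) < a/2) hb).const_mul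
      ((2/a) / B a b))) ?_ ?_
  · exact (((measurable_f a b).div_const _).mul Real.measurable_log).aestronglyMeasurable
  · rw [ae_restrict_iff' measurableSet_Ioo]
    refine Eventually.of_forall fun x hx => ?_
    have hd : 0 ≤ f a b x / B a b := div_nonneg (f_nonneg hx) hB.le
    rw [Real.norm_eq_abs, abs_mul, abs_of_nonneg hd]
    calc f a b x / B a b * |Real.log x|
        ≤ f a b x / B a b * ((2/a) * x ^ (-(a/2))) := by
          exact mul_le_mul_of_nonneg_left (abs_log_le ha hx) hd
      _ = (2/a) / B a b * f (a/2) b x := by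
          unfold f
          rw [show a/2 - 1 = (a - 1) + (-(a/2)) by ring, Real.rpow_add hx.1]
          ring

lemma integrable_log_one_sub_betaMeasure {a b : ℝ} (ha : 0 < a) (hb : 0 < b) :
    Integrable (fun x => Real.log (1 - x)) (_root_.betaMeasure a b) := by
  rw [integrable_betaMeasure_iff ha hb]
  have hB := B_pos ha hb
  refine Integrable.mono' (((integrableOn_f ha (by linarith : (0:ℝ) < b/2)).const_mul
      ((2/b) / B a b))) ?_ ?_
  · exact (((measurable_f a b).div_const _).mul
      (Real.measurable_log.comp (measurable_const.sub measurable_id))).aestronglyMeasurable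
  · rw [ae_restrict_iff' measurableSet_Ioo]
    refine Eventually.of_forall fun x hx => ?_
    have hx1 : (1 - x) ∈ Ioo (0:ℝ) 1 := ⟨by linarith [hx.2], by linarith [hx.1]⟩
    have hd : 0 ≤ f a b x / B a b := div_nonneg (f_nonneg hx) hB.le
    rw [Real.norm_eq_abs, abs_mul, abs_of_nonneg hd]
    calc f a b x / B a b * |Real.log (1 - x)|
        ≤ f a b x / B a b * ((2/b) * (1-x) ^ (-(b/2))) := by
          exact mul_le_mul_of_nonneg_left (abs_log_le hb hx1) hd
      _ = (2/b) / B a b * f a (b/2) x := by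
          unfold f
          rw [show b/2 - 1 = (b - 1) + (-(b/2)) by ring, Real.rpow_add hx1.1]
          ring

lemma betaMeasure_compl_Ioo (a b : ℝ) : _root_.betaMeasure a b (Ioo (0:ℝ) 1)ᶜ = 0 := by
  rw [_root_.betaMeasure, withDensity_apply _ measurableSet_Ioo.compl,
    Measure.restrict_restrict measurableSet_Ioo.compl, compl_inter_self,
    Measure.restrict_empty, lintegral_zero_measure]

end BetaAux

/-- For mutually independent `S s ~ Beta(1-δ, α+δ(s+1))` and
`T s ~ Beta(β,β)`, the partial sums `∑_{s=0}^N E[log((1-S s)(T s))]` tend to `-∞`;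
in particular each term is at most `log((α+δs+δ)/(2(α+δs+1))) < log 1 = 0`. -/
theorem sum_expected_log_stick_tendsto_atBot
    {Ω : Type*} [MeasurableSpace Ω] (P : Measure Ω) [IsProbabilityMeasure P]
    (δ α β : ℝ) (hδ0 : 0 ≤ δ) (hδ1 : δ < 1) (hα : -δ < α) (hβ : 0 < β)
    (S T : ℕ → Ω → ℝ)
    (hSmeas : ∀ s, Measurable (S s)) (hTmeas : ∀ s, Measurable (T s))
    (hindep : iIndepFun (fun i : ℕ ⊕ ℕ => Sum.elim S T i) P)
    (hS : ∀ s : ℕ, Measure.map (S s) P = _root_.betaMeasure (1 - δ) (α + δ * (s + 1)))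
    (hT : ∀ s : ℕ, Measure.map (T s) P = _root_.betaMeasure β β) :
    Tendsto
        (fun N : ℕ => ∑ s ∈ Finset.range (N + 1), ∫ ω, Real.log ((1 - S s ω) * T s ω) ∂P)
        atTop atBot ∧
      ∀ s : ℕ,
        (∫ ω, Real.log ((1 - S s ω) * T s ω) ∂P
            ≤ Real.log ((α + δ * s + δ) / (2 * (α + δ * s + 1)))) ∧
        Real.log ((α + δ * s + δ) / (2 * (α + δ * s + 1))) < Real.log 1 ∧
        Real.log 1 = 0 := by
  have key : ∀ s : ℕ, ∫ ω, Real.log ((1 - S s ω) * T s ω) ∂P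
      ≤ Real.log ((α + δ * s + δ) / (2 * (α + δ * s + 1))) := by
    intro s
    have hds : (0:ℝ) ≤ δ * s := mul_nonneg hδ0 (Nat.cast_nonneg s)
    have ha1 : (0:ℝ) < 1 - δ := by linarith
    have hb1 : (0:ℝ) < α + δ * ((s:ℝ) + 1) := by nlinarith
    set c : ℝ := (α + δ * s + δ) / (2 * (α + δ * s + 1)) with hc_def
    have hY : (0:ℝ) < α + δ * s + 1 := by linarith
    have hX : (0:ℝ) < α + δ * s + δ := by nlinarith
    have hc0 : 0 < c := div_pos hX (by linarith)
    -- a.e. membership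
    have hSmem : ∀ᵐ ω ∂P, S s ω ∈ Ioo (0:ℝ) 1 := by
      rw [ae_iff]
      have h0 : P (S s ⁻¹' (Ioo (0:ℝ) 1)ᶜ) = 0 := by
        rw [← Measure.map_apply (hSmeas s) measurableSet_Ioo.compl, hS s]
        exact BetaAux.betaMeasure_compl_Ioo _ _
      exact h0
    have hTmem : ∀ᵐ ω ∂P, T s ω ∈ Ioo (0:ℝ) 1 := by
      rw [ae_iff]
      have h0 : P (T s ⁻¹' (Ioo (0:ℝ) 1)ᶜ) = 0 := by
        rw [← Measure.map_apply (hTmeas s) measurableSet_Ioo.compl, hT s]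
        exact BetaAux.betaMeasure_compl_Ioo _ _
      exact h0
    -- means
    have hES : ∫ ω, S s ω ∂P = (1 - δ) / (α + δ * s + 1) := by
      have h := integral_map (μ := P) (φ := S s) (hSmeas s).aemeasurable
        (f := fun x : ℝ => x) aestronglyMeasurable_id
      rw [hS s, BetaAux.integral_id_betaMeasure ha1 hb1] at h
      rw [← h]
      congr 1
      ring
    have hET : ∫ ω, T s ω ∂P = 1 / 2 := by
      have h := integral_map (μ := P) (φ := T s) (hTmeas s).aemeasurable
        (f := fun x : ℝ => x) aestronglyMeasurable_id
      rw [hT s, BetaAux.integral_id_betaMeasure hβ hβ] at h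
      rw [← h, show β + β = 2 * β by ring]
      rw [div_eq_div_iff (by linarith) two_ne_zero]
      ring
    -- integrability of the variables
    have hIntS : Integrable (S s) P := by
      refine Integrable.mono' (integrable_const 1) (hSmeas s).aestronglyMeasurable ?_
      filter_upwards [hSmem] with ω hω
      rw [Real.norm_eq_abs, abs_of_pos hω.1]; exact hω.2.le
    have hIntT : Integrable (T s) P := by
      refine Integrable.mono' (integrable_const 1) (hTmeas s).aestronglyMeasurable ?_
      filter_upwards [hTmem] with ω hω
      rw [Real.norm_eq_abs, abs_of_pos hω.1]; exact hω.2.le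
    have hInt1S : Integrable (fun ω => 1 - S s ω) P := (integrable_const 1).sub hIntS
    have hE1S : ∫ ω, (1 - S s ω) ∂P = (α + δ * s + δ) / (α + δ * s + 1) := by
      rw [integral_sub (integrable_const 1) hIntS, hES, integral_const]
      simp only [probReal_univ, ENNReal.toReal_one, smul_eq_mul, one_mul]
      field_simp
      ring
    -- independence
    have hind : IndepFun (S s) (T s) P :=
      hindep.indepFun (show (Sum.inl s : ℕ ⊕ ℕ) ≠ Sum.inr s by simp)
    have hind1 : IndepFun (fun ω => 1 - S s ω) (T s) P :=
      hind.comp (measurable_const.sub measurable_id) measurable_id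
    have hprod : Integrable (fun ω => (1 - S s ω) * T s ω) P := by
      refine Integrable.mono' (integrable_const 1)
        ((measurable_const.sub (hSmeas s)).mul (hTmeas s)).aestronglyMeasurable ?_
      filter_upwards [hSmem, hTmem] with ω h1 h2
      rw [Real.norm_eq_abs, abs_mul]
      have e1 : |1 - S s ω| ≤ 1 := by rw [abs_of_pos (by linarith [h1.2])]; linarith [h1.1]
      have e2 : |T s ω| ≤ 1 := by rw [abs_of_pos h2.1]; linarith [h2.2]
      nlinarith [abs_nonneg (1 - S s ω), abs_nonneg (T s ω)]
    have hEprod : ∫ ω, (1 - S s ω) * T s ω ∂P = c := by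
      have hEmul := hind1.integral_fun_mul_eq_mul_integral hInt1S.aestronglyMeasurable hIntT.aestronglyMeasurable
      have hEmul' : ∫ ω, (1 - S s ω) * T s ω ∂P
          = (∫ ω, (1 - S s ω) ∂P) * ∫ ω, T s ω ∂P := hEmul
      rw [hEmul', hE1S, hET, hc_def, div_mul_div_comm]
      ring_nf
    -- integrability of logs
    have hIntlog1S : Integrable (fun ω => Real.log (1 - S s ω)) P := by
      have hmg : AEStronglyMeasurable (fun x : ℝ => Real.log (1 - x)) (Measure.map (S s) P) :=
        (Real.measurable_log.comp (measurable_const.sub measurable_id)).aestronglyMeasurable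
      have h1 : Integrable (fun x : ℝ => Real.log (1 - x)) (Measure.map (S s) P) := by
        rw [hS s]; exact BetaAux.integrable_log_one_sub_betaMeasure ha1 hb1
      exact (integrable_map_measure hmg (hSmeas s).aemeasurable).1 h1
    have hIntlogT : Integrable (fun ω => Real.log (T s ω)) P := by
      have hmg : AEStronglyMeasurable Real.log (Measure.map (T s) P) :=
        Real.measurable_log.aestronglyMeasurable
      have h1 : Integrable Real.log (Measure.map (T s) P) := by
        rw [hT s]; exact BetaAux.integrable_log_betaMeasure hβ hβ
      exact (integrable_map_measure hmg (hTmeas s).aemeasurable).1 h1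
    have haeEq : ∀ᵐ ω ∂P, Real.log ((1 - S s ω) * T s ω)
        = Real.log (1 - S s ω) + Real.log (T s ω) := by
      filter_upwards [hSmem, hTmem] with ω h1 h2
      exact Real.log_mul (by linarith [h1.2] : (1:ℝ) - S s ω ≠ 0) h2.1.ne'
    have hIntlog : Integrable (fun ω => Real.log ((1 - S s ω) * T s ω)) P :=
      (hIntlog1S.add hIntlogT).congr (haeEq.mono fun ω h => h.symm)
    -- pointwise tangent-line bound
    have hbound : ∀ᵐ ω ∂P, Real.log ((1 - S s ω) * T s ω)
        ≤ Real.log c + ((1 - S s ω) * T s ω) / c - 1 := by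
      filter_upwards [hSmem, hTmem] with ω h1 h2
      have hXp : 0 < (1 - S s ω) * T s ω := mul_pos (by linarith [h1.2]) h2.1
      have h3 := Real.log_le_sub_one_of_pos (div_pos hXp hc0)
      rw [Real.log_div hXp.ne' hc0.ne'] at h3
      linarith
    have hadd : Integrable (fun ω => Real.log c + ((1 - S s ω) * T s ω) / c) P :=
      (integrable_const (Real.log c)).add (hprod.div_const c)
    have hRHSint : Integrable (fun ω => Real.log c + ((1 - S s ω) * T s ω) / c - 1) P :=
      hadd.sub (integrable_const 1)
    have hmono := integral_mono_ae hIntlog hRHSint hbound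
    have hR : ∫ ω, (Real.log c + ((1 - S s ω) * T s ω) / c - 1) ∂P = Real.log c := by
      rw [integral_sub hadd (integrable_const 1),
        integral_add (integrable_const _) (hprod.div_const c), integral_div, hEprod,
        integral_const, integral_const]
      simp only [probReal_univ, ENNReal.toReal_one, smul_eq_mul, one_mul]
      rw [div_self hc0.ne']
      ring
    rw [hR] at hmono
    exact hmono
  -- negativity of each log bound
  have keyneg : ∀ s : ℕ, Real.log ((α + δ * s + δ) / (2 * (α + δ * s + 1))) < Real.log 1 := by
    intro s
    have hds : (0:ℝ) ≤ δ * s := mul_nonneg hδ0 (Nat.cast_nonneg s)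
    have hY : (0:ℝ) < α + δ * s + 1 := by linarith
    have hX : (0:ℝ) < α + δ * s + δ := by nlinarith
    rw [Real.log_one]
    refine Real.log_neg (div_pos hX (by linarith)) ?_
    rw [div_lt_one (by linarith)]
    linarith
  refine ⟨?_, fun s => ⟨key s, keyneg s, Real.log_one⟩⟩
  -- the divergence
  have keyhalf : ∀ s : ℕ, ∫ ω, Real.log ((1 - S s ω) * T s ω) ∂P ≤ Real.log (1/2) := by
    intro s
    refine (key s).trans ?_
    have hds : (0:ℝ) ≤ δ * s := mul_nonneg hδ0 (Nat.cast_nonneg s)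
    have hY : (0:ℝ) < α + δ * s + 1 := by linarith
    have hX : (0:ℝ) < α + δ * s + δ := by nlinarith
    have hle : (α + δ * s + δ) / (2 * (α + δ * s + 1)) ≤ 1/2 := by
      rw [div_le_div_iff₀ (by linarith) two_pos]
      nlinarith
    exact Real.log_le_log (div_pos hX (by linarith)) hle
  have hsum : ∀ N : ℕ, (∑ s ∈ Finset.range (N + 1), ∫ ω, Real.log ((1 - S s ω) * T s ω) ∂P)
      ≤ ((N:ℝ) + 1) * Real.log (1/2) := by
    intro N
    calc ∑ s ∈ Finset.range (N + 1), ∫ ω, Real.log ((1 - S s ω) * T s ω) ∂P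
        ≤ ∑ _s ∈ Finset.range (N + 1), Real.log (1/2) :=
          Finset.sum_le_sum fun s _ => keyhalf s
      _ = ((N:ℝ) + 1) * Real.log (1/2) := by
          rw [Finset.sum_const, Finset.card_range, nsmul_eq_mul]
          push_cast
          ring
  have hten : Tendsto (fun N : ℕ => ((N:ℝ) + 1) * Real.log (1/2)) atTop atBot := by
    have h1 : Tendsto (fun N : ℕ => ((N:ℝ) + 1)) atTop atTop :=
      tendsto_atTop_add_const_right atTop 1 tendsto_natCast_atTop_atTop
    have hL : Real.log (1/2:ℝ) < 0 := Real.log_neg (by norm_num) (by norm_num)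
    exact h1.atTop_mul_const_of_neg hL
  exact tendsto_atBot_mono hsum hten
end
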